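/- arXiv:2207.14098 — 7 statements merged into one kernel-verified Lean document; each statement's English description precedes it below -/
import Mathlib

section
/- Let C be a closed cone with nonempty interior in a real Banach space and let f : int C → int C be subhomogeneous and type K order-preserving. If f has a fixed point in int C and for some x ∈ int C the closure of the orbit {f^k(x) : k ∈ ℕ} is compact in the norm topology, then the sequence of iterates f^k(x) converges to a fixed point of f. -/
open Filter Topology

set_option maxHeartbeats 4000000 in
/-- Let C be a closed cone with nonempty interior in a real Banach space and
let f : int C → int C be subhomogeneous and type K order-preserving. If f has a fixed point
in int C and for some x ∈ int C the closure of the orbit {f^k(x) : k ∈ ℕ} is compact in the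
norm topology, then the sequence of iterates f^k(x) converges to a fixed point of f. -/
theorem iterates_converge_of_typeK
    {X : Type*} [NormedAddCommGroup X] [NormedSpace ℝ X] [CompleteSpace X]
    (C : Set X) (hC_closed : IsClosed C) (hC_convex : Convex ℝ C)
    (hC_cone : ∀ x ∈ C, ∀ t : ℝ, 0 ≤ t → t • x ∈ C)
    (hC_pointed : ∀ x, x ∈ C → -x ∈ C → x = 0)
    (hC_int : (interior C).Nonempty)
    (f : X → X)
    (hf_maps : ∀ x ∈ interior C, f x ∈ interior C)
    (hf_subhom : ∀ x ∈ interior C, ∀ t : ℝ, 1 ≤ t → t • f x - f (t • x) ∈ C)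
    (hf_typeK : ∀ x ∈ interior C, ∀ y ∈ interior C, y - x ∈ C →
      ∃ ε > 0, (f y - f x) - ε • (y - x) ∈ C)
    (u : X) (hu : u ∈ interior C) (hfu : f u = u)
    (x : X) (hx : x ∈ interior C)
    (horbit : IsCompact (closure (Set.range fun k => f^[k] x))) :
    ∃ v ∈ interior C, f v = v ∧ Tendsto (fun k => f^[k] x) atTop (𝓝 v) := by

  classical
  -- ## basic cone facts
  have hadd : ∀ {a b : X}, a ∈ C → b ∈ C → a + b ∈ C := by
    intro a b ha hb
    have h2 : (1/2 : ℝ) • a + (1/2 : ℝ) • b ∈ C :=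
      hC_convex ha hb (by norm_num) (by norm_num) (by norm_num)
    have h3 := hC_cone _ h2 2 (by norm_num)
    rwa [smul_add, smul_smul, smul_smul, show (2:ℝ)*(1/2) = 1 by norm_num, one_smul,
      one_smul] at h3
  have hzero : (0:X) ∈ C := by
    obtain ⟨z, hz⟩ := hC_int
    simpa using hC_cone z (interior_subset hz) 0 le_rfl
  have heqp : ∀ {a b : X}, a - b ∈ C → b - a ∈ C → a = b := by
    intro a b h1 h2
    have h3 := hC_pointed (a-b) h1 (by simpa [neg_sub] using h2)
    exact sub_eq_zero.mp h3
  have hint_add : ∀ {a b : X}, a ∈ interior C → b ∈ C → a + b ∈ interior C := by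
    intro a b ha hb
    have hsub : (fun z => z + b) '' interior C ⊆ C := by
      rintro _ ⟨z, hz, rfl⟩; exact hadd (interior_subset hz) hb
    have hopen : IsOpen ((fun z => z + b) '' interior C) :=
      (isOpenMap_add_right b) _ isOpen_interior
    exact interior_maximal hsub hopen ⟨a, ha, rfl⟩
  have hint_smul : ∀ {t : ℝ} {a : X}, 0 < t → a ∈ interior C → t • a ∈ interior C := by
    intro t a ht ha
    have hsub : (fun z : X => t • z) '' interior C ⊆ C := by
      rintro _ ⟨z, hz, rfl⟩; exact hC_cone _ (interior_subset hz) t ht.le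
    have hopen : IsOpen ((fun z : X => t • z) '' interior C) :=
      (isOpenMap_smul₀ ht.ne') _ isOpen_interior
    exact interior_maximal hsub hopen ⟨a, ha, rfl⟩
  have hmono : ∀ {a b : X}, a ∈ interior C → b ∈ interior C → b - a ∈ C → f b - f a ∈ C := by
    intro a b ha hb hba
    obtain ⟨ε, hε, h⟩ := hf_typeK a ha b hb hba
    have h2 : (ε:ℝ) • (b - a) ∈ C := hC_cone _ hba _ (by positivity)
    rw [Nat.cast_smul_eq_nsmul] at h2
    have h3 := hadd h h2
    simpa using h3
  have htypeK' : ∀ {a b : X}, a ∈ interior C → b ∈ interior C → b - a ∈ C →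
      f b - f a - (b - a) ∈ C := by
    intro a b ha hb hba
    obtain ⟨ε, hε, h⟩ := hf_typeK a ha b hb hba
    rw [← Nat.cast_smul_eq_nsmul ℝ] at h
    have h2 : ((ε:ℝ) - 1) • (b - a) ∈ C := hC_cone _ hba _ (by
      have h4 : (1:ℝ) ≤ (ε:ℝ) := by exact_mod_cast hε
      linarith)
    have h3 := hadd h h2
    have heq2 : f b - f a - (ε:ℝ) • (b - a) + ((ε:ℝ) - 1) • (b - a)
        = f b - f a - (b - a) := by
      rw [sub_smul, one_smul]; abel
    rwa [heq2] at h3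
  have hsubdown : ∀ {t : ℝ} {a : X}, a ∈ interior C → 0 < t → t ≤ 1 →
      f (t • a) - t • f a ∈ C := by
    intro t a ha ht ht1
    have hta : t • a ∈ interior C := hint_smul ht ha
    have h := hf_subhom (t • a) hta t⁻¹ ((one_le_inv₀ ht).mpr ht1)
    rw [smul_smul, inv_mul_cancel₀ ht.ne', one_smul] at h
    have h2 := hC_cone _ h t ht.le
    rwa [smul_sub, smul_smul, mul_inv_cancel₀ ht.ne', one_smul] at h2
  have hiter_int : ∀ (m : ℕ) {a : X}, a ∈ interior C → f^[m] a ∈ interior C := by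
    intro m
    induction m with
    | zero => intro a ha; simpa using ha
    | succ n ih =>
      intro a ha
      rw [Function.iterate_succ_apply']
      exact hf_maps _ (ih ha)
  have hiter_mono : ∀ (m : ℕ) {a b : X}, a ∈ interior C → b ∈ interior C → b - a ∈ C →
      f^[m] b - f^[m] a ∈ C := by
    intro m
    induction m with
    | zero => intro a b _ _ h; simpa using h
    | succ n ih =>
      intro a b ha hb h
      rw [Function.iterate_succ_apply', Function.iterate_succ_apply']
      exact hmono (hiter_int n ha) (hiter_int n hb) (ih ha hb h)
  have hiter_up : ∀ (m : ℕ) {t : ℝ} {a : X}, 1 ≤ t → a ∈ interior C →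
      t • f^[m] a - f^[m] (t • a) ∈ C := by
    intro m
    induction m with
    | zero => intro t a _ _; simpa using hzero
    | succ n ih =>
      intro t a ht ha
      have htpos : (0:ℝ) < t := lt_of_lt_of_le one_pos ht
      rw [Function.iterate_succ_apply', Function.iterate_succ_apply']
      have h1 := hf_subhom (f^[n] a) (hiter_int n ha) t ht
      have h2 : f (t • f^[n] a) - f (f^[n] (t • a)) ∈ C :=
        hmono (hiter_int n (hint_smul htpos ha)) (hint_smul htpos (hiter_int n ha)) (ih ht ha)
      have h3 := hadd h1 h2
      simpa using h3
  have hsmall : ∀ {a : X}, a ∈ interior C → ∀ (b : X), ∃ η : ℝ, 0 < η ∧ a - η • b ∈ C := by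
    intro a ha b
    have h0 : Tendsto (fun n : ℕ => 1/((n:ℝ)+1)) atTop (𝓝 0) :=
      tendsto_one_div_add_atTop_nhds_zero_nat
    have h1 : Tendsto (fun n : ℕ => a - (1/((n:ℝ)+1)) • b) atTop (𝓝 (a - (0:ℝ) • b)) :=
      tendsto_const_nhds.sub (h0.smul_const b)
    rw [zero_smul, sub_zero] at h1
    have hev := h1.eventually_mem (isOpen_interior.mem_nhds ha)
    obtain ⟨n, hn⟩ := hev.exists
    exact ⟨1/((n:ℝ)+1), by positivity, interior_subset hn⟩
  have hbig : ∀ {a : X}, a ∈ interior C → ∀ (b : X), ∃ T : ℝ, 1 ≤ T ∧ T • a - b ∈ C := by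
    intro a ha b
    obtain ⟨η, hη, h⟩ := hsmall ha b
    refine ⟨max η⁻¹ 1, le_max_right _ _, ?_⟩
    have h1 : η⁻¹ • (a - η • b) ∈ C := hC_cone _ h _ (by positivity)
    have h2 : ((max η⁻¹ 1) - η⁻¹) • a ∈ C :=
      hC_cone _ (interior_subset ha) _ (sub_nonneg.mpr (le_max_left _ _))
    have h3 := hadd h1 h2
    have heq2 : η⁻¹ • (a - η • b) + ((max η⁻¹ 1) - η⁻¹) • a = (max η⁻¹ 1) • a - b := by
      rw [smul_sub, smul_smul, inv_mul_cancel₀ hη.ne', one_smul, sub_smul]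
      abel
    rwa [heq2] at h3

  -- ## the gauge functional M
  set M : X → X → ℝ := fun a b => sInf {t : ℝ | 0 ≤ t ∧ t • b - a ∈ C} with hMdef
  have hSbdd : ∀ a b : X, BddBelow {t : ℝ | 0 ≤ t ∧ t • b - a ∈ C} :=
    fun a b => ⟨0, fun t ht => ht.1⟩
  have hM_le : ∀ {a b : X} {t : ℝ}, 0 ≤ t → t • b - a ∈ C → M a b ≤ t := by
    intro a b t ht h
    exact csInf_le (hSbdd a b) ⟨ht, h⟩
  have hM_mem : ∀ {a b : X}, b ∈ interior C → 0 ≤ M a b ∧ (M a b) • b - a ∈ C := by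
    intro a b hb
    obtain ⟨T, hT, hTm⟩ := hbig hb a
    have hne : Set.Nonempty {t : ℝ | 0 ≤ t ∧ t • b - a ∈ C} := ⟨T, by linarith, hTm⟩
    have hcl : IsClosed {t : ℝ | 0 ≤ t ∧ t • b - a ∈ C} := by
      have hset : {t : ℝ | 0 ≤ t ∧ t • b - a ∈ C}
          = Set.Ici (0:ℝ) ∩ (fun t : ℝ => t • b - a) ⁻¹' C := by
        ext t; simp [Set.mem_Ici, Set.mem_preimage]
      rw [hset]
      exact isClosed_Ici.inter (hC_closed.preimage
        ((continuous_id.smul continuous_const).sub continuous_const))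
    exact hcl.csInf_mem hne (hSbdd a b)
  have hM_out : ∀ {a b : X} {t : ℝ}, b ∈ interior C → M a b ≤ t → t • b - a ∈ C := by
    intro a b t hb h
    obtain ⟨h0, hm⟩ := hM_mem (a := a) hb
    have h1 : (t - M a b) • b ∈ C := hC_cone _ (interior_subset hb) _ (by linarith)
    have h2 := hadd hm h1
    have heq2 : (M a b) • b - a + (t - M a b) • b = t • b - a := by rw [sub_smul]; abel
    rwa [heq2] at h2
  -- ## the orbit and a limit point
  set a : ℕ → X := fun k => f^[k] x with ha_def
  have ha_int : ∀ k, a k ∈ interior C := fun k => hiter_int k hx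
  obtain ⟨η₀, hη₀, hηm⟩ := hsmall hx u
  set β : ℝ := min η₀ 1 with hβdef
  have hβpos : 0 < β := lt_min hη₀ one_pos
  have hβ1 : β ≤ 1 := min_le_right _ _
  have hxβ : x - β • u ∈ C := by
    have h2 : (η₀ - β) • u ∈ C :=
      hC_cone _ (interior_subset hu) _ (sub_nonneg.mpr (min_le_left _ _))
    have h3 := hadd hηm h2
    have heq2 : x - η₀ • u + (η₀ - β) • u = x - β • u := by rw [sub_smul]; abel
    rwa [heq2] at h3
  have hfβu : f (β • u) - β • u ∈ C := by
    have h := hsubdown hu hβpos hβ1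
    rwa [hfu] at h
  have hak_lb : ∀ k, a k - β • u ∈ C := by
    intro k
    induction k with
    | zero => simpa [ha_def] using hxβ
    | succ n ih =>
      have h1 : f (a n) - f (β • u) ∈ C := hmono (hint_smul hβpos hu) (ha_int n) ih
      have h2 := hadd h1 hfβu
      have heq2 : (f (a n) - f (β • u)) + (f (β • u) - β • u) = f (a n) - β • u := by abel
      rw [heq2] at h2
      simpa [ha_def, Function.iterate_succ_apply'] using h2
  obtain ⟨w, hwK, φ, hφ, hφa⟩ := horbit.tendsto_subseq
    (fun k => subset_closure (Set.mem_range_self k))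
  have hφa' : Tendsto (fun j => a (φ j)) atTop (𝓝 w) := hφa
  have hw_lb : w - β • u ∈ C := by
    refine hC_closed.mem_of_tendsto (hφa'.sub_const (β • u)) ?_
    exact Eventually.of_forall fun j => hak_lb (φ j)
  have hw_int : w ∈ interior C := by
    have h := hint_add (hint_smul hβpos hu) hw_lb
    simpa using h
  set c : ℕ → X := fun m => f^[m] w with hc_def
  have hc_int : ∀ m, c m ∈ interior C := fun m => hiter_int m hw_int
  have hc0 : c 0 = w := rfl
  have hc_succ : ∀ m, c (m+1) = f (c m) := by
    intro m
    simp only [hc_def]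
    exact Function.iterate_succ_apply' f m w
  -- ## Thompson closeness of the subsequence
  have hclose : ∀ δ : ℝ, 0 < δ → ∀ᶠ j in atTop,
      ((1+δ) • w - a (φ j) ∈ C ∧ (1+δ) • (a (φ j)) - w ∈ C) := by
    intro δ hδ
    have hδw : δ • w ∈ interior C := hint_smul hδ hw_int
    have h1 : Tendsto (fun j => (1+δ) • w - a (φ j)) atTop (𝓝 ((1+δ) • w - w)) :=
      tendsto_const_nhds.sub hφa'
    have h2 : Tendsto (fun j => (1+δ) • (a (φ j)) - w) atTop (𝓝 ((1+δ) • w - w)) :=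
      (hφa'.const_smul (1+δ)).sub_const w
    have heq2 : (1+δ) • w - w = δ • w := by rw [add_smul, one_smul]; abel
    rw [heq2] at h1 h2
    filter_upwards [h1.eventually_mem (isOpen_interior.mem_nhds hδw),
      h2.eventually_mem (isOpen_interior.mem_nhds hδw)] with j hj1 hj2
    exact ⟨interior_subset hj1, interior_subset hj2⟩
  -- ## recurrence of w along its own orbit, with Thompson error (1+δ)^2
  have hrec : ∀ δ : ℝ, 0 < δ → ∀ n : ℕ, ∃ m, n ≤ m ∧
      ((1+δ)^2) • w - c m ∈ C ∧ ((1+δ)^2) • (c m) - w ∈ C := by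
    intro δ hδ n
    have h1pos : (0:ℝ) < 1 + δ := by linarith
    have h1le : (1:ℝ) ≤ 1 + δ := by linarith
    obtain ⟨J, hJ⟩ := eventually_atTop.mp (hclose δ hδ)
    set j' := max (n + φ J) J with hj'def
    have hj'J : J ≤ j' := le_max_right _ _
    have hφle : φ J ≤ φ j' := hφ.monotone hj'J
    set m := φ j' - φ J with hmdef
    have hm_add : m + φ J = φ j' := Nat.sub_add_cancel hφle
    have hφj' : j' ≤ φ j' := hφ.le_apply
    have hmn : n ≤ m := by
      have : n + φ J ≤ j' := le_max_left _ _
      omega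
    obtain ⟨hA0, hB0⟩ := hJ J le_rfl
    obtain ⟨hA, hB⟩ := hJ j' hj'J
    have ha' : a (φ j') = f^[m] (a (φ J)) := by
      rw [← hm_add]
      simp only [ha_def]
      exact Function.iterate_add_apply f m (φ J) x
    have hAm : (1+δ) • (c m) - a (φ j') ∈ C := by
      have hmono' : f^[m] ((1+δ) • w) - f^[m] (a (φ J)) ∈ C :=
        hiter_mono m (ha_int _) (hint_smul h1pos hw_int) hA0
      have hup : (1+δ) • f^[m] w - f^[m] ((1+δ) • w) ∈ C := hiter_up m h1le hw_int
      have h3 := hadd hup hmono'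
      rw [ha']
      have heq2 : ((1+δ) • f^[m] w - f^[m] ((1+δ) • w))
          + (f^[m] ((1+δ) • w) - f^[m] (a (φ J)))
          = (1+δ) • (c m) - f^[m] (a (φ J)) := by
        simp only [hc_def]; abel
      rwa [heq2] at h3
    have hBm : (1+δ) • (a (φ j')) - c m ∈ C := by
      have hmono' : f^[m] ((1+δ) • (a (φ J))) - f^[m] w ∈ C :=
        hiter_mono m hw_int (hint_smul h1pos (ha_int _)) hB0
      have hup : (1+δ) • f^[m] (a (φ J)) - f^[m] ((1+δ) • (a (φ J))) ∈ C :=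
        hiter_up m h1le (ha_int _)
      have h3 := hadd hup hmono'
      rw [ha']
      have heq2 : ((1+δ) • f^[m] (a (φ J)) - f^[m] ((1+δ) • (a (φ J))))
          + (f^[m] ((1+δ) • (a (φ J))) - f^[m] w)
          = (1+δ) • (f^[m] (a (φ J))) - c m := by
        simp only [hc_def]; abel
      rwa [heq2] at h3
    refine ⟨m, hmn, ?_, ?_⟩
    · have h3 := hadd (hC_cone _ hA (1+δ) h1pos.le) hBm
      have heq2 : (1+δ) • ((1+δ) • w - a (φ j')) + ((1+δ) • (a (φ j')) - c m)
          = ((1+δ)^2) • w - c m := by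
        rw [smul_sub, smul_smul, ← pow_two]; abel
      rwa [heq2] at h3
    · have h3 := hadd (hC_cone _ hAm (1+δ) h1pos.le) hB
      have heq2 : (1+δ) • ((1+δ) • (c m) - a (φ j')) + ((1+δ) • (a (φ j')) - w)
          = ((1+δ)^2) • (c m) - w := by
        rw [smul_sub, smul_smul, ← pow_two]; abel
      rwa [heq2] at h3

  -- ## the contraction-ratio sequence along the orbit of w
  set s : ℕ → ℝ := fun m => max (max (M (c (m+1)) (c m)) (M (c m) (c (m+1)))) 1 with hs_def
  have hs_one : ∀ m, 1 ≤ s m := fun m => le_max_right _ _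
  have hs_pos : ∀ m, (0:ℝ) < s m := fun m => lt_of_lt_of_le one_pos (hs_one m)
  have hs_mem1 : ∀ m, (s m) • (c m) - c (m+1) ∈ C := fun m =>
    hM_out (hc_int m) ((le_max_left _ _).trans (le_max_left _ _))
  have hs_mem2 : ∀ m, (s m) • (c (m+1)) - c m ∈ C := fun m =>
    hM_out (hc_int (m+1)) ((le_max_right _ _).trans (le_max_left _ _))
  have hs_anti : ∀ m, s (m+1) ≤ s m := by
    intro m
    have h1 : (s m) • (c (m+1)) - c (m+2) ∈ C := by
      have hsub : (s m) • (f (c m)) - f ((s m) • (c m)) ∈ C :=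
        hf_subhom _ (hc_int m) _ (hs_one m)
      have hmono' : f ((s m) • (c m)) - f (c (m+1)) ∈ C :=
        hmono (hc_int (m+1)) (hint_smul (hs_pos m) (hc_int m)) (hs_mem1 m)
      have h3 := hadd hsub hmono'
      have heq2 : ((s m) • (f (c m)) - f ((s m) • (c m))) + (f ((s m) • (c m)) - f (c (m+1)))
          = (s m) • (f (c m)) - f (c (m+1)) := by abel
      rw [heq2, ← hc_succ m, ← hc_succ (m+1)] at h3
      exact h3
    have h2 : (s m) • (c (m+2)) - c (m+1) ∈ C := by
      have hmono' : f ((s m) • (c (m+1))) - f (c m) ∈ C :=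
        hmono (hc_int m) (hint_smul (hs_pos m) (hc_int (m+1))) (hs_mem2 m)
      have hsub : (s m) • (f (c (m+1))) - f ((s m) • (c (m+1))) ∈ C :=
        hf_subhom _ (hc_int (m+1)) _ (hs_one m)
      have h3 := hadd hsub hmono'
      have heq2 : ((s m) • (f (c (m+1))) - f ((s m) • (c (m+1))))
          + (f ((s m) • (c (m+1))) - f (c m))
          = (s m) • (f (c (m+1))) - f (c m) := by abel
      rw [heq2, ← hc_succ (m+1), ← hc_succ m] at h3
      exact h3
    exact max_le (max_le (hM_le (hs_pos m).le h1) (hM_le (hs_pos m).le h2)) (hs_one m)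
  have hs_antitone : Antitone s := antitone_nat_of_succ_le hs_anti
  have hs_bdd : BddBelow (Set.range s) := ⟨1, by rintro _ ⟨k, rfl⟩; exact hs_one k⟩
  set L : ℝ := ⨅ m, s m with hL_def
  have hs_tendsto : Tendsto s atTop (𝓝 L) := tendsto_atTop_ciInf hs_antitone hs_bdd
  have hL_one : 1 ≤ L := le_ciInf hs_one
  have hL_le : ∀ m, L ≤ s m := fun m => ciInf_le hs_bdd m
  -- ## constancy of s along the orbit (via recurrence)
  have hrecn : ∀ n : ℕ, ∃ m, n ≤ m ∧
      ((1+1/((n:ℝ)+1))^2) • w - c m ∈ C ∧ ((1+1/((n:ℝ)+1))^2) • (c m) - w ∈ C :=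
    fun n => hrec (1/((n:ℝ)+1)) (by positivity) n
  choose mseq hmseq hT1 hT2 using hrecn
  set t : ℕ → ℝ := fun n => (1+1/((n:ℝ)+1))^2 with ht_def
  have ht_one : ∀ n, 1 ≤ t n := by
    intro n
    have h0 : (0:ℝ) < 1/((n:ℝ)+1) := by positivity
    have h1 : (1:ℝ) ≤ 1 + 1/((n:ℝ)+1) := by linarith
    exact one_le_pow₀ h1
  have ht_pos : ∀ n, (0:ℝ) < t n := fun n => lt_of_lt_of_le one_pos (ht_one n)
  have ht_tendsto : Tendsto t atTop (𝓝 1) := by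
    have h1 : Tendsto (fun n : ℕ => 1 + 1/((n:ℝ)+1)) atTop (𝓝 (1 + 0)) :=
      tendsto_const_nhds.add tendsto_one_div_add_atTop_nhds_zero_nat
    rw [add_zero] at h1
    have h2 := h1.pow 2
    simpa [ht_def, one_div] using h2
  have key1 : ∀ n, ((t n)^2 * s (mseq n)) • w - c 1 ∈ C := by
    intro n
    have e1 : (t n) • (c (mseq n + 1)) - c 1 ∈ C := by
      have hsub : (t n) • (f (c (mseq n))) - f ((t n) • (c (mseq n))) ∈ C :=
        hf_subhom _ (hc_int _) _ (ht_one n)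
      have hmono' : f ((t n) • (c (mseq n))) - f w ∈ C :=
        hmono hw_int (hint_smul (ht_pos n) (hc_int _)) (hT2 n)
      have h3 := hadd hsub hmono'
      have heq2 : ((t n) • (f (c (mseq n))) - f ((t n) • (c (mseq n))))
          + (f ((t n) • (c (mseq n))) - f w) = (t n) • (f (c (mseq n))) - f w := by abel
      rw [heq2, ← hc_succ (mseq n)] at h3
      have hc1 : c 1 = f w := by rw [hc_succ 0, hc0]
      rwa [← hc1] at h3
    have e2 : ((t n) * s (mseq n)) • (c (mseq n)) - (t n) • (c (mseq n + 1)) ∈ C := by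
      have h3 := hC_cone _ (hs_mem1 (mseq n)) (t n) (ht_pos n).le
      rwa [smul_sub, smul_smul] at h3
    have e3 : ((t n)^2 * s (mseq n)) • w - ((t n) * s (mseq n)) • (c (mseq n)) ∈ C := by
      have h3 := hC_cone _ (hT1 n) ((t n) * s (mseq n))
        (by positivity)
      rw [smul_sub, smul_smul] at h3
      have heqc : (t n * s (mseq n)) * t n = (t n)^2 * s (mseq n) := by ring
      rwa [heqc] at h3
    have h4 := hadd (hadd e3 e2) e1
    have heq2 : (((t n)^2 * s (mseq n)) • w - ((t n) * s (mseq n)) • (c (mseq n)))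
        + (((t n) * s (mseq n)) • (c (mseq n)) - (t n) • (c (mseq n + 1)))
        + ((t n) • (c (mseq n + 1)) - c 1)
        = ((t n)^2 * s (mseq n)) • w - c 1 := by abel
    rwa [heq2] at h4
  have key2 : ∀ n, ((t n)^2 * s (mseq n)) • (c 1) - w ∈ C := by
    intro n
    have e1 : (t n) • (c (mseq n)) - w ∈ C := hT2 n
    have e2 : ((t n) * s (mseq n)) • (c (mseq n + 1)) - (t n) • (c (mseq n)) ∈ C := by
      have h3 := hC_cone _ (hs_mem2 (mseq n)) (t n) (ht_pos n).le
      rwa [smul_sub, smul_smul] at h3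
    have e3 : ((t n)^2 * s (mseq n)) • (c 1) - ((t n) * s (mseq n)) • (c (mseq n + 1)) ∈ C := by
      have hstep : (t n) • (c 1) - c (mseq n + 1) ∈ C := by
        have hmono' : f ((t n) • w) - f (c (mseq n)) ∈ C :=
          hmono (hc_int _) (hint_smul (ht_pos n) hw_int) (hT1 n)
        have hsub : (t n) • (f w) - f ((t n) • w) ∈ C :=
          hf_subhom _ hw_int _ (ht_one n)
        have h3 := hadd hsub hmono'
        have heq2 : ((t n) • (f w) - f ((t n) • w)) + (f ((t n) • w) - f (c (mseq n)))
            = (t n) • (f w) - f (c (mseq n)) := by abel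
        rw [heq2, ← hc_succ (mseq n)] at h3
        have hc1 : c 1 = f w := by rw [hc_succ 0, hc0]
        rwa [← hc1] at h3
      have h3 := hC_cone _ hstep ((t n) * s (mseq n)) (by positivity)
      rw [smul_sub, smul_smul] at h3
      have heqc : (t n * s (mseq n)) * t n = (t n)^2 * s (mseq n) := by ring
      rwa [heqc] at h3
    have h4 := hadd (hadd e3 e2) e1
    have heq2 : (((t n)^2 * s (mseq n)) • (c 1) - ((t n) * s (mseq n)) • (c (mseq n + 1)))
        + (((t n) * s (mseq n)) • (c (mseq n + 1)) - (t n) • (c (mseq n)))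
        + ((t n) • (c (mseq n)) - w)
        = ((t n)^2 * s (mseq n)) • (c 1) - w := by abel
    rwa [heq2] at h4
  have hcoef : Tendsto (fun n => (t n)^2 * s (mseq n)) atTop (𝓝 L) := by
    have h1 : Tendsto (fun n => s (mseq n)) atTop (𝓝 L) :=
      hs_tendsto.comp (tendsto_atTop_mono hmseq tendsto_id)
    have h2 : Tendsto (fun n => (t n)^2) atTop (𝓝 1) := by simpa using ht_tendsto.pow 2
    have h3 := h2.mul h1
    rwa [one_mul] at h3
  have hLw1 : L • w - c 1 ∈ C := by
    refine hC_closed.mem_of_tendsto ((hcoef.smul_const w).sub_const (c 1)) ?_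
    exact Eventually.of_forall key1
  have hLw2 : L • (c 1) - w ∈ C := by
    refine hC_closed.mem_of_tendsto ((hcoef.smul_const (c 1)).sub_const w) ?_
    exact Eventually.of_forall key2
  have hs0_le : s 0 ≤ L := by
    have h1 : M (c 1) (c 0) ≤ L := hM_le (by linarith) (by rw [hc0]; exact hLw1)
    have h2 : M (c 0) (c 1) ≤ L := hM_le (by linarith) (by rw [hc0]; exact hLw2)
    exact max_le (max_le h1 h2) hL_one
  have hs_const : ∀ k, s k = L :=
    fun k => le_antisymm ((hs_antitone (Nat.zero_le k)).trans hs0_le) (hL_le k)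

  -- ## dichotomy
  rcases eq_or_lt_of_le hL_one with hL1 | hLgt
  · -- L = 1 : w is a fixed point and the orbit converges to it
    have hc1 : c 1 = f w := by rw [hc_succ 0, hc0]
    have hfw : f w = w := by
      have h1 : w - f w ∈ C := by
        have h := hLw1
        rw [← hL1, one_smul, hc1] at h
        exact h
      have h2 : f w - w ∈ C := by
        have h := hLw2
        rw [← hL1, one_smul, hc1] at h
        exact h
      exact heqp h2 h1
    have hiterw : ∀ m, f^[m] w = w := fun m => Function.iterate_fixed hfw m
    have hsand : ∀ δ : ℝ, 0 < δ → ∃ K : ℕ, ∀ k, K ≤ k →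
        ((1+δ) • w - a k ∈ C ∧ (1+δ) • (a k) - w ∈ C) := by
      intro δ hδ
      have h1pos : (0:ℝ) < 1 + δ := by linarith
      have h1le : (1:ℝ) ≤ 1 + δ := by linarith
      obtain ⟨J, hJ⟩ := eventually_atTop.mp (hclose δ hδ)
      obtain ⟨h1, h2⟩ := hJ J le_rfl
      refine ⟨φ J, fun k hk => ?_⟩
      set m := k - φ J with hm
      have hm_add : m + φ J = k := Nat.sub_add_cancel hk
      have hak : a k = f^[m] (a (φ J)) := by
        rw [← hm_add]
        simp only [ha_def]
        exact Function.iterate_add_apply f m (φ J) x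
      constructor
      · have hmono' : f^[m] ((1+δ) • w) - f^[m] (a (φ J)) ∈ C :=
          hiter_mono m (ha_int _) (hint_smul h1pos hw_int) h1
        have hup : (1+δ) • f^[m] w - f^[m] ((1+δ) • w) ∈ C := hiter_up m h1le hw_int
        rw [hiterw m] at hup
        have h3 := hadd hup hmono'
        rw [hak]
        have heq2 : ((1+δ) • w - f^[m] ((1+δ) • w))
            + (f^[m] ((1+δ) • w) - f^[m] (a (φ J))) = (1+δ) • w - f^[m] (a (φ J)) := by abel
        rwa [heq2] at h3
      · have hmono' : f^[m] ((1+δ) • (a (φ J))) - f^[m] w ∈ C :=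
          hiter_mono m hw_int (hint_smul h1pos (ha_int _)) h2
        rw [hiterw m] at hmono'
        have hup : (1+δ) • f^[m] (a (φ J)) - f^[m] ((1+δ) • (a (φ J))) ∈ C :=
          hiter_up m h1le (ha_int _)
        have h3 := hadd hup hmono'
        rw [hak]
        have heq2 : ((1+δ) • f^[m] (a (φ J)) - f^[m] ((1+δ) • (a (φ J))))
            + (f^[m] ((1+δ) • (a (φ J))) - w) = (1+δ) • (f^[m] (a (φ J))) - w := by abel
        rwa [heq2] at h3
    have hcoef1 : Tendsto (fun n : ℕ => 1 + 1/((n:ℝ)+1)) atTop (𝓝 1) := by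
      have h1 : Tendsto (fun n : ℕ => 1 + 1/((n:ℝ)+1)) atTop (𝓝 (1 + 0)) :=
        tendsto_const_nhds.add tendsto_one_div_add_atTop_nhds_zero_nat
      rwa [add_zero] at h1
    have hconv : Tendsto a atTop (𝓝 w) := by
      apply tendsto_of_subseq_tendsto
      intro ns hns
      obtain ⟨z, hzK, ms, hms, hmsz⟩ := horbit.tendsto_subseq
        (x := fun n => a (ns n)) (fun n => subset_closure ⟨ns n, rfl⟩)
      have hmsz' : Tendsto (fun n => a (ns (ms n))) atTop (𝓝 z) := hmsz
      have hzw : ∀ δ : ℝ, 0 < δ → ((1+δ) • w - z ∈ C ∧ (1+δ) • z - w ∈ C) := by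
        intro δ hδ
        obtain ⟨K, hK⟩ := hsand δ hδ
        have hev : ∀ᶠ n in atTop, K ≤ ns (ms n) :=
          (hns.comp hms.tendsto_atTop).eventually_ge_atTop K
        constructor
        · refine hC_closed.mem_of_tendsto (tendsto_const_nhds.sub hmsz') ?_
          filter_upwards [hev] with n hn
          exact (hK _ hn).1
        · refine hC_closed.mem_of_tendsto ((hmsz'.const_smul (1+δ)).sub_const w) ?_
          filter_upwards [hev] with n hn
          exact (hK _ hn).2
      have hz1 : w - z ∈ C := by
        have ht : Tendsto (fun n : ℕ => (1 + 1/((n:ℝ)+1)) • w - z) atTop (𝓝 ((1:ℝ) • w - z)) :=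
          (hcoef1.smul_const w).sub_const z
        rw [one_smul] at ht
        exact hC_closed.mem_of_tendsto ht
          (Eventually.of_forall fun n => (hzw _ (by positivity)).1)
      have hz2 : z - w ∈ C := by
        have ht : Tendsto (fun n : ℕ => (1 + 1/((n:ℝ)+1)) • z - w) atTop (𝓝 ((1:ℝ) • z - w)) :=
          (hcoef1.smul_const z).sub_const w
        rw [one_smul] at ht
        exact hC_closed.mem_of_tendsto ht
          (Eventually.of_forall fun n => (hzw _ (by positivity)).2)
      have hzw' : z = w := heqp hz2 hz1
      exact ⟨ms, by rw [← hzw']; exact hmsz'⟩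
    exact ⟨w, hw_int, hfw, hconv⟩
  · -- L > 1 : contradiction
    exfalso
    set τ : ℝ := (1 + L)/2 with hτdef
    have hτ1 : 1 < τ := by rw [hτdef]; linarith
    have hτL : τ < L := by rw [hτdef]; linarith
    have hτpos : (0:ℝ) < τ := by linarith
    set δ : ℝ := Real.sqrt τ - 1 with hδdef
    have hsqτ : Real.sqrt τ = 1 + δ := by rw [hδdef]; ring
    have hδpos : 0 < δ := by
      have h1 : (1:ℝ) < Real.sqrt τ := by
        rw [show (1:ℝ) = Real.sqrt 1 by rw [Real.sqrt_one]]
        exact Real.sqrt_lt_sqrt zero_le_one hτ1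
      rw [hδdef]; linarith
    have h1δ : (1+δ)^2 = τ := by
      rw [← hsqτ]
      exact Real.sq_sqrt hτpos.le
    obtain ⟨N, hN1, hNa, hNb⟩ := hrec δ hδpos 1
    rw [h1δ] at hNa hNb
    set p : ℕ → X := fun k => L • (c k) - c (k+1) with hp_def
    set r : ℕ → X := fun k => L • (c (k+1)) - c k with hr_def
    have hLpos : (0:ℝ) < L := by linarith
    have hp_eq : ∀ k, p k = L • (c k) - c (k+1) := fun k => rfl
    have hr_eq : ∀ k, r k = L • (c (k+1)) - c k := fun k => rfl
    clear_value p r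
    clear_value L
    clear_value s
    clear_value c
    clear_value M
    clear_value a
    have hpC : ∀ k, p k ∈ C := by
      intro k
      have h := hs_mem1 k
      rw [hs_const k] at h
      rw [hp_eq k]
      exact h
    have hrC : ∀ k, r k ∈ C := by
      intro k
      have h := hs_mem2 k
      rw [hs_const k] at h
      rw [hr_eq k]
      exact h
    have hgainp : ∀ k, p (k+1) - p k ∈ C := by
      intro k
      have hK := htypeK' (hc_int (k+1)) (hint_smul hLpos (hc_int k)) (hp_eq k ▸ hpC k)
      have hsub := hf_subhom (c k) (hc_int k) L hL_one
      have h3 := hadd hsub hK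
      have heq2 : (L • f (c k) - f (L • c k))
          + (f (L • (c k)) - f (c (k+1)) - (L • (c k) - c (k+1)))
          = (L • f (c k) - f (c (k+1))) - (L • (c k) - c (k+1)) := by abel
      rw [heq2, ← hc_succ k, ← hc_succ (k+1)] at h3
      rw [hp_eq (k+1), hp_eq k]
      exact h3
    have hgainr : ∀ k, r (k+1) - r k ∈ C := by
      intro k
      have hK := htypeK' (hc_int k) (hint_smul hLpos (hc_int (k+1))) (hr_eq k ▸ hrC k)
      have hsub := hf_subhom (c (k+1)) (hc_int (k+1)) L hL_one
      have h3 := hadd hsub hK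
      have heq2 : (L • f (c (k+1)) - f (L • c (k+1)))
          + (f (L • (c (k+1))) - f (c k) - (L • (c (k+1)) - c k))
          = (L • f (c (k+1)) - f (c k)) - (L • (c (k+1)) - c k) := by abel
      rw [heq2, ← hc_succ (k+1), ← hc_succ k] at h3
      rw [hr_eq (k+1), hr_eq k]
      exact h3
    have hpmono : ∀ m n : ℕ, m ≤ n → p n - p m ∈ C := by
      intro m n h
      induction n, h using Nat.le_induction with
      | base => simpa using hzero
      | succ n hmn ih =>
        have h3 := hadd (hgainp n) ih
        have heq2 : (p (n+1) - p n) + (p n - p m) = p (n+1) - p m := by abel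
        rwa [heq2] at h3
    have hrmono : ∀ m n : ℕ, m ≤ n → r n - r m ∈ C := by
      intro m n h
      induction n, h using Nat.le_induction with
      | base => simpa using hzero
      | succ n hmn ih =>
        have h3 := hadd (hgainr n) ih
        have heq2 : (r (n+1) - r n) + (r n - r m) = r (n+1) - r m := by abel
        rwa [heq2] at h3
    have hsumC : ∀ (F : ℕ → X), (∀ k ∈ Finset.range N, F k ∈ C) →
        ∑ k ∈ Finset.range N, F k ∈ C := fun F hF =>
      Finset.sum_induction F (· ∈ C) (fun _ _ ha hb => hadd ha hb) hzero hF
    have hPPkey : ∀ nn : ℕ, 1 ≤ nn →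
        (∑ k ∈ Finset.range nn, p k) - (L • (c 0) - c nn) ∈ C := by
      intro nn h1
      induction nn with
      | zero => omega
      | succ i ih =>
        by_cases hi : i = 0
        · subst hi
          have heq2 : (∑ k ∈ Finset.range 1, p k) - (L • (c 0) - c 1) = 0 := by
            rw [Finset.sum_range_one, hp_eq 0]; abel
          rw [heq2]; exact hzero
        · have hi1 : 1 ≤ i := Nat.one_le_iff_ne_zero.mpr hi
          have h3 := hadd (ih hi1)
            (hC_cone _ (interior_subset (hc_int i)) (L - 1) (sub_nonneg.mpr hL_one))
          rw [Finset.sum_range_succ]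
          have heq2 : ((∑ k ∈ Finset.range i, p k) - (L • (c 0) - c i)) + (L - 1) • (c i)
              = ((∑ k ∈ Finset.range i, p k) + p i) - (L • (c 0) - c (i+1)) := by
            rw [hp_eq i, sub_smul, one_smul]; abel
          rwa [heq2] at h3
    have hRRkey : ∀ nn : ℕ, 1 ≤ nn →
        (∑ k ∈ Finset.range nn, r k) - (L • (c nn) - c 0) ∈ C := by
      intro nn h1
      induction nn with
      | zero => omega
      | succ i ih =>
        by_cases hi : i = 0
        · subst hi
          have heq2 : (∑ k ∈ Finset.range 1, r k) - (L • (c 1) - c 0) = 0 := by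
            rw [Finset.sum_range_one, hr_eq 0]; abel
          rw [heq2]; exact hzero
        · have hi1 : 1 ≤ i := Nat.one_le_iff_ne_zero.mpr hi
          have h3 := hadd (ih hi1)
            (hC_cone _ (interior_subset (hc_int i)) (L - 1) (sub_nonneg.mpr hL_one))
          rw [Finset.sum_range_succ]
          have heq2 : ((∑ k ∈ Finset.range i, r k) - (L • (c i) - c 0)) + (L - 1) • (c i)
              = ((∑ k ∈ Finset.range i, r k) + r i) - (L • (c (i+1)) - c 0) := by
            rw [hr_eq i, sub_smul, one_smul]; abel
          rwa [heq2] at h3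
    have hNpos : (0:ℝ) < (N:ℝ) := by exact_mod_cast hN1
    have hNP : (N:ℝ) • (p N) - (∑ k ∈ Finset.range N, p k) ∈ C := by
      have hsum : (N:ℝ) • (p N) - (∑ k ∈ Finset.range N, p k)
          = ∑ k ∈ Finset.range N, (p N - p k) := by
        rw [Finset.sum_sub_distrib, Finset.sum_const, Finset.card_range,
          Nat.cast_smul_eq_nsmul ℝ]
      rw [hsum]
      exact hsumC _ (fun k hk => hpmono k N (le_of_lt (Finset.mem_range.mp hk)))
    have hNR : (N:ℝ) • (r N) - (∑ k ∈ Finset.range N, r k) ∈ C := by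
      have hsum : (N:ℝ) • (r N) - (∑ k ∈ Finset.range N, r k)
          = ∑ k ∈ Finset.range N, (r N - r k) := by
        rw [Finset.sum_sub_distrib, Finset.sum_const, Finset.card_range,
          Nat.cast_smul_eq_nsmul ℝ]
      rw [hsum]
      exact hsumC _ (fun k hk => hrmono k N (le_of_lt (Finset.mem_range.mp hk)))
    have hpN_int : p N ∈ interior C := by
      have hc0w : τ • (c 0) - c N ∈ C := by rw [hc0]; exact hNa
      have hbody : (τ • (c 0) - c N)
          + (((∑ k ∈ Finset.range N, p k) - (L • (c 0) - c N))
          + ((N:ℝ) • (p N) - (∑ k ∈ Finset.range N, p k))) ∈ C :=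
        hadd hc0w (hadd (hPPkey N hN1) hNP)
      have h1 : (L - τ) • (c 0) + ((τ • (c 0) - c N)
          + (((∑ k ∈ Finset.range N, p k) - (L • (c 0) - c N))
          + ((N:ℝ) • (p N) - (∑ k ∈ Finset.range N, p k)))) ∈ interior C :=
        hint_add (hint_smul (by linarith) (hc_int 0)) hbody
      have heq2 : (L - τ) • (c 0) + ((τ • (c 0) - c N)
          + (((∑ k ∈ Finset.range N, p k) - (L • (c 0) - c N))
          + ((N:ℝ) • (p N) - (∑ k ∈ Finset.range N, p k))))
          = (N:ℝ) • (p N) := by rw [sub_smul]; abel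
      rw [heq2] at h1
      have heq3 : p N = ((N:ℝ))⁻¹ • ((N:ℝ) • (p N)) := by
        rw [smul_smul, inv_mul_cancel₀ hNpos.ne', one_smul]
      rw [heq3]
      exact hint_smul (by positivity) h1
    have hrN_int : r N ∈ interior C := by
      have hc0w : τ • (c N) - c 0 ∈ C := by rw [hc0]; exact hNb
      have hbody : (τ • (c N) - c 0)
          + (((∑ k ∈ Finset.range N, r k) - (L • (c N) - c 0))
          + ((N:ℝ) • (r N) - (∑ k ∈ Finset.range N, r k))) ∈ C :=
        hadd hc0w (hadd (hRRkey N hN1) hNR)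
      have h1 : (L - τ) • (c N) + ((τ • (c N) - c 0)
          + (((∑ k ∈ Finset.range N, r k) - (L • (c N) - c 0))
          + ((N:ℝ) • (r N) - (∑ k ∈ Finset.range N, r k)))) ∈ interior C :=
        hint_add (hint_smul (by linarith) (hc_int N)) hbody
      have heq2 : (L - τ) • (c N) + ((τ • (c N) - c 0)
          + (((∑ k ∈ Finset.range N, r k) - (L • (c N) - c 0))
          + ((N:ℝ) • (r N) - (∑ k ∈ Finset.range N, r k))))
          = (N:ℝ) • (r N) := by rw [sub_smul]; abel
      rw [heq2] at h1
      have heq3 : r N = ((N:ℝ))⁻¹ • ((N:ℝ) • (r N)) := by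
        rw [smul_smul, inv_mul_cancel₀ hNpos.ne', one_smul]
      rw [heq3]
      exact hint_smul (by positivity) h1
    obtain ⟨η₁, hη₁, hη₁m⟩ := hsmall hpN_int (c N)
    obtain ⟨η₂, hη₂, hη₂m⟩ := hsmall hrN_int (c (N+1))
    set η : ℝ := min (min η₁ η₂) ((L-1)/2) with hηdef
    have hηpos : 0 < η := lt_min (lt_min hη₁ hη₂) (by linarith)
    have hηa : η ≤ η₁ := (min_le_left _ _).trans (min_le_left _ _)
    have hηb : η ≤ η₂ := (min_le_left _ _).trans (min_le_right _ _)
    have hηc : η ≤ (L-1)/2 := min_le_right _ _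
    have hM1 : M (c (N+1)) (c N) ≤ L - η := by
      refine hM_le (by linarith) ?_
      have h3 := hadd hη₁m
        (hC_cone _ (interior_subset (hc_int N)) (η₁ - η) (by linarith))
      have heq2 : (p N - η₁ • (c N)) + (η₁ - η) • (c N) = (L - η) • (c N) - c (N+1) := by
        rw [hp_eq N, sub_smul η₁ η, sub_smul L η]; abel
      rwa [heq2] at h3
    have hM2 : M (c N) (c (N+1)) ≤ L - η := by
      refine hM_le (by linarith) ?_
      have h3 := hadd hη₂m
        (hC_cone _ (interior_subset (hc_int (N+1))) (η₂ - η) (by linarith))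
      have heq2 : (r N - η₂ • (c (N+1))) + (η₂ - η) • (c (N+1))
          = (L - η) • (c (N+1)) - c N := by
        rw [hr_eq N, sub_smul η₂ η, sub_smul L η]; abel
      rwa [heq2] at h3
    have hfinal : s N ≤ L - η := by
      simp only [hs_def]
      exact max_le (max_le hM1 hM2) (by linarith)
    rw [hs_const N] at hfinal
    linarith
end

section
/- Let C be a closed cone with nonempty interior in a finite-dimensional real Banach space, let f : int C → int C be order-preserving and subhomogeneous, and suppose f has a fixed point in int C. For 0 < λ < 1 let f_λ := λf + (1 − λ)·id. Then for every x ∈ int C the sequence f_λ^k(x) converges to a fixed point of f. -/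
/-!
For `t ≥ 1`, order-preserving and subhomogeneous maps preserve the relation "`x ≤ t y` and
`y ≤ t x`", i.e. they are nonexpansive for Thompson's metric. So, `u` being a fixed point, an orbit
of the averaged map `g = λ f + (1 - λ) id` stays in a Thompson ball around `u`; by normality of the
cone that ball is compact, and the orbit has a cluster point `z`.

The gauges `min {a ≥ 1 | f x ≤ a x}` and `min {b ≥ 1 | x ≤ b f x}` are nonincreasing along orbits of
`g`. Their limits `a∞`, `b∞` still bound `f` along the orbit of `z`, and, if they exceed `1`, they
do so on the boundary of `C` (otherwise a smaller gauge would occur along the original orbit). For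
`a∞ > 1`, a supporting functional `ℓ` at the boundary point `a∞ g^p z - f (g^p z)` also vanishes at
the earlier defects `a∞ g^j z - f (g^j z)`, `j ≤ p`, since each defect dominates `1 - λ` times the
previous one. Then `ℓ (g^j z) = (λ a∞ + 1 - λ)^j ℓ z` for `j ≤ p`, which is impossible for large `p`
as the orbit of `z` is Thompson-bounded; likewise `b∞ = 1`. Hence `f z ≤ z ≤ f z`. Finally,
Thompson balls around the fixed point `z` are `g`-invariant and the orbit visits each of them, so
it converges to `z`.
-/

open Filter Topology Set Metric Pointwise

theorem MapClusterPt.iterate_orbit {α : Type*} [TopologicalSpace α] {g : α → α} {x z : α}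
    (hz : MapClusterPt z atTop fun k => g^[k] x) {j : ℕ} (hg : ContinuousAt g^[j] z) :
    MapClusterPt (g^[j] z) atTop fun k => g^[k] x := by
  refine MapClusterPt.of_comp (tendsto_add_atTop_nat j) ?_
  convert hz.continuousAt_comp hg using 1
  funext k
  rw [Function.comp_apply, Function.comp_apply, add_comm, Function.iterate_add_apply]

lemma exists_pow_notMem_Icc {c T : ℝ} (hc : c ≠ 1) (hT : 0 < T) : ∃ n : ℕ, c ^ n ∉ Icc T⁻¹ T := by
  rcases hc.lt_or_gt with hc | hc
  · obtain ⟨n, hn⟩ := exists_pow_lt_of_lt_one (inv_pos.2 hT) hc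
    exact ⟨n, fun h => hn.not_ge h.1⟩
  · obtain ⟨n, hn⟩ := pow_unbounded_of_one_lt T hc
    exact ⟨n, fun h => hn.not_ge h.2⟩

lemma eq_zero_of_mul_le_succ {r : ℕ → ℝ} {κ : ℝ} (hκ : 0 < κ) (hr : ∀ j, 0 ≤ r j)
    (hstep : ∀ j, κ * r j ≤ r (j + 1)) {n : ℕ} (hn : r n = 0) {j : ℕ} (hj : j ≤ n) : r j = 0 :=
  Nat.decreasingInduction (motive := fun j _ => r j = 0)
    (fun j _ ih => by nlinarith [hstep j, hr j]) hn hj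

section

variable {X : Type*} [NormedAddCommGroup X] [NormedSpace ℝ X]

def averagedMap (l : ℝ) (f : X → X) (x : X) : X := l • f x + (1 - l) • x

namespace PointedCone

section Cone

variable {C : PointedCone ℝ X} {s t : ℝ} {v x y z : X}

lemma smul_mem_interior (ht : 0 < t) (hx : x ∈ interior (C : Set X)) :
    t • x ∈ interior (C : Set X) := by
  have hsub : t • interior (C : Set X) ⊆ interior C := by
    rw [← interior_smul₀ ht.ne']
    exact interior_mono (smul_set_subset_iff.2 fun y hy => C.smul_mem ht.le hy)
  exact hsub (smul_mem_smul_set hx)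

lemma add_mem_interior (hx : x ∈ interior (C : Set X)) (hy : y ∈ C) :
    x + y ∈ interior (C : Set X) :=
  interior_maximal (add_subset_iff.2 fun _ ha _ hb => C.add_mem (interior_subset ha) hb)
    isOpen_interior.add_right (add_mem_add hx hy)

theorem exists_dual_nonneg_eq_zero_of_notMem_interior (hy : y ∈ C)
    (hy' : y ∉ interior (C : Set X)) (hint : (interior (C : Set X)).Nonempty) :
    ∃ ℓ : X →L[ℝ] ℝ, (∀ c ∈ C, 0 ≤ ℓ c) ∧ ℓ y = 0 ∧ ∀ w ∈ interior (C : Set X), 0 < ℓ w := by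
  obtain ⟨ℓ, hℓ⟩ := geometric_hahn_banach_point_open C.convex.interior isOpen_interior hy'
  have hpos : ∀ w ∈ interior (C : Set X), 0 < ℓ w := fun w hw => by
    simpa using hℓ _ (add_mem_interior hw hy)
  have hcl : (C : Set X) ⊆ closure (interior C) := by
    rw [C.convex.closure_interior_eq_closure_of_nonempty_interior hint]
    exact subset_closure
  have hnonneg : ∀ c ∈ C, 0 ≤ ℓ c := fun c hc =>
    closure_minimal (fun w hw => (hpos w hw).le) (isClosed_le continuous_const ℓ.continuous)
      (hcl hc)
  have hle : ℓ y ≤ 0 := by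
    simpa using closure_minimal (t := {w | ℓ y ≤ ℓ w}) (fun w hw => (hℓ w hw).le)
      (isClosed_le continuous_const ℓ.continuous) (hcl C.zero_mem)
  exact ⟨ℓ, hnonneg, le_antisymm hle (hnonneg y hy), hpos⟩

/-- The Thompson distance between `x` and `y` is at most `log t`. -/
def ThompsonNear (C : PointedCone ℝ X) (t : ℝ) (x y : X) : Prop :=
  t • y - x ∈ C ∧ t • x - y ∈ C

lemma ThompsonNear.symm (h : C.ThompsonNear t x y) : C.ThompsonNear t y x := And.symm h

lemma ThompsonNear.trans (hs : 0 ≤ s) (ht : 0 ≤ t) (hxy : C.ThompsonNear s x y)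
    (hyz : C.ThompsonNear t y z) : C.ThompsonNear (s * t) x z := by
  constructor
  · convert C.add_mem (C.smul_mem hs hyz.1) hxy.1 using 1
    module
  · convert C.add_mem (C.smul_mem ht hxy.2) hyz.2 using 1
    module

lemma ThompsonNear.mem (ht : 0 < t) (h : C.ThompsonNear t x y) (hy : y ∈ C) : x ∈ C := by
  rw [← C.smul_mem_iff ht]
  simpa using C.add_mem hy h.2

lemma ThompsonNear.mem_interior (ht : 0 < t) (h : C.ThompsonNear t x y)
    (hy : y ∈ interior (C : Set X)) : x ∈ interior (C : Set X) := by
  have htx : t • x ∈ interior (C : Set X) := by simpa using add_mem_interior hy h.2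
  simpa [smul_smul, ht.ne'] using smul_mem_interior (inv_pos.2 ht) htx

lemma exists_thompsonNear (hx : x ∈ interior (C : Set X)) (hy : y ∈ interior (C : Set X)) :
    ∃ t ≥ 1, C.ThompsonNear t x y := by
  have hsmall : ∀ᶠ s : ℝ in 𝓝 0, y - s • x ∈ interior (C : Set X) ∧
      x - s • y ∈ interior (C : Set X) :=
    ((Continuous.tendsto' (by fun_prop) 0 y (by simp)).eventually (isOpen_interior.mem_nhds hy)).and
      ((Continuous.tendsto' (by fun_prop) 0 x (by simp)).eventually (isOpen_interior.mem_nhds hx))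
  obtain ⟨s, ⟨h1, h2⟩, hs0, hs1⟩ :=
    ((hsmall.filter_mono nhdsWithin_le_nhds).and (Ioo_mem_nhdsGT one_pos)).exists
  refine ⟨s⁻¹, one_le_inv₀ hs0 |>.2 hs1.le, ?_, ?_⟩
  · simpa [smul_sub, smul_smul, hs0.ne'] using C.smul_mem (inv_nonneg.2 hs0.le) (interior_subset h1)
  · simpa [smul_sub, smul_smul, hs0.ne'] using C.smul_mem (inv_nonneg.2 hs0.le) (interior_subset h2)

lemma eventually_thompsonNear_nhds (hy : y ∈ interior (C : Set X)) (ht : 1 < t) :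
    ∀ᶠ x in 𝓝 y, C.ThompsonNear t x y := by
  have hlim : (t - 1) • y ∈ interior (C : Set X) := smul_mem_interior (sub_pos.2 ht) hy
  have h1 : Tendsto (fun x => t • y - x) (𝓝 y) (𝓝 ((t - 1) • y)) :=
    Continuous.tendsto' (by fun_prop) y _ (by module)
  have h2 : Tendsto (fun x => t • x - y) (𝓝 y) (𝓝 ((t - 1) • y)) :=
    Continuous.tendsto' (by fun_prop) y _ (by module)
  filter_upwards [h1.eventually (isOpen_interior.mem_nhds hlim),
    h2.eventually (isOpen_interior.mem_nhds hlim)] with x hx1 hx2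
  exact ⟨interior_subset hx1, interior_subset hx2⟩

lemma norm_sub_le_of_thompsonNear {m : ℝ} (hm : 0 < m)
    (hnormal : ∀ c ∈ C, ∀ d, d - c ∈ C → m * ‖c‖ ≤ ‖d‖) (ht : 1 ≤ t) (hv : v ∈ C)
    (h : C.ThompsonNear t y v) : ‖y - v‖ ≤ (t - 1) * (2 * t + 1) / m * ‖v‖ := by
  have hy := h.mem (by linarith) hv
  have hy_le : m * ‖y‖ ≤ t * ‖v‖ := by
    simpa [norm_smul, abs_of_nonneg (by linarith : (0 : ℝ) ≤ t)] using hnormal y hy _ h.1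
  have hty_le : m * ‖t • y - v‖ ≤ (t ^ 2 - 1) * ‖v‖ := by
    have hd : (t ^ 2 - 1) • v - (t • y - v) ∈ C := by
      convert C.smul_mem (by linarith : (0 : ℝ) ≤ t) h.1 using 1
      module
    simpa [norm_smul, abs_of_nonneg (by nlinarith : (0 : ℝ) ≤ t ^ 2 - 1)] using hnormal _ h.2 _ hd
  have htri : ‖y - v‖ ≤ ‖t • y - v‖ + (t - 1) * ‖y‖ := by
    calc ‖y - v‖ = ‖(t • y - v) - (t - 1) • y‖ := by congr 1; module
      _ ≤ ‖t • y - v‖ + ‖(t - 1) • y‖ := norm_sub_le _ _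
      _ = ‖t • y - v‖ + (t - 1) * ‖y‖ := by
          rw [norm_smul, Real.norm_of_nonneg (by linarith)]
  rw [div_mul_eq_mul_div, le_div_iff₀ hm]
  nlinarith [norm_nonneg y]

variable [FiniteDimensional ℝ X]

/-- Normality of `C`. -/
theorem exists_pos_mul_norm_le (hC : IsClosed (C : Set X)) (hCs : (C : ConvexCone ℝ X).Salient) :
    ∃ m > 0, ∀ c ∈ C, ∀ d, d - c ∈ C → m * ‖c‖ ≤ ‖d‖ := by
  have hpos : ∀ c ∈ (C : Set X) ∩ sphere 0 1, 0 < infDist (-c) C := by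
    rintro c ⟨hc, hc1⟩
    refine (hC.notMem_iff_infDist_pos ⟨0, C.zero_mem⟩).1 (hCs c hc ?_)
    rintro rfl
    simp at hc1
  obtain ⟨m, hm, hmin⟩ := ((isCompact_sphere 0 1).inter_left hC).exists_forall_le'
    ((continuous_infDist_pt _).comp continuous_neg).continuousOn hpos
  refine ⟨m, hm, fun c hc d hdc => ?_⟩
  rcases eq_or_ne c 0 with rfl | hc0
  · simp
  have hn : 0 < ‖c‖ := norm_pos_iff.2 hc0
  have hunit : ‖c‖⁻¹ • c ∈ (C : Set X) ∩ sphere 0 1 :=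
    ⟨C.smul_mem (inv_nonneg.2 hn.le) hc, by simp [norm_smul, hn.ne']⟩
  have hdist : infDist (-(‖c‖⁻¹ • c)) C ≤ ‖c‖⁻¹ * ‖d‖ := by
    calc infDist (-(‖c‖⁻¹ • c)) C ≤ dist (-(‖c‖⁻¹ • c)) (‖c‖⁻¹ • (d - c)) :=
          infDist_le_dist_of_mem (C.smul_mem (inv_nonneg.2 hn.le) hdc)
      _ = ‖c‖⁻¹ * ‖d‖ := by
          rw [dist_eq_norm, ← norm_neg, neg_sub, smul_sub, sub_neg_eq_add, sub_add_cancel,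
            norm_smul, norm_inv, norm_norm]
  have := (hmin _ hunit).trans hdist
  rwa [le_inv_mul_iff₀ hn, mul_comm] at this

theorem tendsto_of_forall_thompsonNear (hC : IsClosed (C : Set X))
    (hCs : (C : ConvexCone ℝ X).Salient) (hv : v ∈ C) {α : Type*} {l : Filter α} {y : α → X}
    (h : ∀ t > 1, ∀ᶠ a in l, C.ThompsonNear t (y a) v) : Tendsto y l (𝓝 v) := by
  obtain ⟨m, hm, hnormal⟩ := exists_pos_mul_norm_le hC hCs
  have hbound : Tendsto (fun t : ℝ => (t - 1) * (2 * t + 1) / m * ‖v‖) (𝓝[>] 1) (𝓝 0) := by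
    have := (by fun_prop : Continuous fun t : ℝ => (t - 1) * (2 * t + 1) / m * ‖v‖).tendsto 1
    simpa using this.mono_left nhdsWithin_le_nhds
  refine Metric.tendsto_nhds.2 fun ε hε => ?_
  obtain ⟨t, htε, ht⟩ := ((hbound.eventually (gt_mem_nhds hε)).and self_mem_nhdsWithin).exists
  filter_upwards [h t ht] with a ha
  rw [dist_eq_norm]
  exact (norm_sub_le_of_thompsonNear hm hnormal (le_of_lt ht) hv ha).trans_lt htε

theorem isCompact_setOf_thompsonNear (hC : IsClosed (C : Set X))
    (hCs : (C : ConvexCone ℝ X).Salient) (ht : 0 < t) (hv : v ∈ C) :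
    IsCompact {y | C.ThompsonNear t y v} := by
  obtain ⟨m, hm, hnormal⟩ := exists_pos_mul_norm_le hC hCs
  refine Metric.isCompact_of_isClosed_isBounded
    ((hC.preimage (by fun_prop)).inter (hC.preimage (by fun_prop)))
    (isBounded_iff_forall_norm_le.2 ⟨t * ‖v‖ / m, fun y h => ?_⟩)
  rw [le_div_iff₀ hm, mul_comm]
  simpa [norm_smul, abs_of_pos ht] using hnormal y (h.mem ht hv) _ h.1

end Cone

section Maps

variable {C : PointedCone ℝ X} {f p q : X → X} {l t T : ℝ} {u w x y z : X}

/-- Equivalent to `f` being order-preserving and subhomogeneous on the interior of `C`. -/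
def SubhomMonotoneOn (C : PointedCone ℝ X) (f : X → X) : Prop :=
  ∀ x ∈ interior (C : Set X), ∀ y ∈ interior (C : Set X), ∀ t : ℝ, 1 ≤ t →
    t • y - x ∈ C → t • f y - f x ∈ C

lemma subhomMonotoneOn_of_monotone_of_subhom
    (hmono : ∀ x ∈ interior (C : Set X), ∀ y ∈ interior (C : Set X), y - x ∈ C → f y - f x ∈ C)
    (hsub : ∀ x ∈ interior (C : Set X), ∀ t : ℝ, 1 ≤ t → t • f x - f (t • x) ∈ C) :
    C.SubhomMonotoneOn f := fun x hx y hy t ht hxy => by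
  simpa using C.add_mem (hsub y hy t ht)
    (hmono x hx (t • y) (smul_mem_interior (by linarith) hy) hxy)

lemma ThompsonNear.map (hf : C.SubhomMonotoneOn f) (hx : x ∈ interior (C : Set X))
    (hy : y ∈ interior (C : Set X)) (ht : 1 ≤ t) (h : C.ThompsonNear t x y) :
    C.ThompsonNear t (f x) (f y) :=
  ⟨hf x hx y hy t ht h.1, hf y hy x hx t ht h.2⟩

theorem SubhomMonotoneOn.continuousOn [FiniteDimensional ℝ X] (hC : IsClosed (C : Set X))
    (hCs : (C : ConvexCone ℝ X).Salient) (hf : C.SubhomMonotoneOn f)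
    (hmaps : MapsTo f (interior C) (interior C)) : ContinuousOn f (interior C) := by
  intro w hw
  refine (tendsto_of_forall_thompsonNear hC hCs (interior_subset (hmaps hw))
    fun t ht => ?_).mono_left nhdsWithin_le_nhds
  filter_upwards [eventually_thompsonNear_nhds hw ht, isOpen_interior.mem_nhds hw] with x hxw hx
  exact hxw.map hf hx hw ht.le

lemma mapsTo_averagedMap (hl0 : 0 ≤ l) (hl1 : l ≤ 1) (hf : MapsTo f (interior C) (interior C)) :
    MapsTo (averagedMap l f) (interior (C : Set X)) (interior C) := fun _ hx =>
  C.convex.interior (hf hx) hx hl0 (sub_nonneg.2 hl1) (by ring)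

lemma ThompsonNear.averagedMap_apply (hl0 : 0 ≤ l) (hl1 : l ≤ 1) (h : C.ThompsonNear t x y)
    (hf : C.ThompsonNear t (f x) (f y)) :
    C.ThompsonNear t (averagedMap l f x) (averagedMap l f y) := by
  constructor
  · convert C.add_mem (C.smul_mem hl0 hf.1) (C.smul_mem (sub_nonneg.2 hl1) h.1) using 1
    simp only [averagedMap]
    module
  · convert C.add_mem (C.smul_mem hl0 hf.2) (C.smul_mem (sub_nonneg.2 hl1) h.2) using 1
    simp only [averagedMap]
    module

lemma ThompsonNear.iterate_averagedMap (hf : C.SubhomMonotoneOn f)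
    (hmaps : MapsTo f (interior C) (interior C)) (hl0 : 0 ≤ l) (hl1 : l ≤ 1)
    (hu : u ∈ interior (C : Set X)) (hfu : f u = u) (ht : 1 ≤ t) (hx : x ∈ interior (C : Set X))
    (h : C.ThompsonNear t x u) (k : ℕ) : C.ThompsonNear t ((averagedMap l f)^[k] x) u := by
  induction k with
  | zero => exact h
  | succ k ih =>
    have hxk := (mapsTo_averagedMap hl0 hl1 hmaps).iterate k hx
    have hgu : averagedMap l f u = u := by simp [averagedMap, hfu, ← add_smul]
    rw [Function.iterate_succ_apply', ← hgu]
    exact ih.averagedMap_apply hl0 hl1 (ih.map hf hxk hu ht)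

lemma smul_sub_averagedMap_mem (hf : C.SubhomMonotoneOn f)
    (hmaps : MapsTo f (interior C) (interior C)) (hl0 : 0 ≤ l) (hl1 : l ≤ 1)
    (hw : w ∈ interior (C : Set X)) {a : ℝ} (ha : 1 ≤ a) (h : a • w - f w ∈ C) :
    (a • averagedMap l f w - f (averagedMap l f w)) - (1 - l) • (a • w - f w) ∈ C := by
  have hc : 1 ≤ l * a + (1 - l) := by nlinarith
  have hgw : (l * a + (1 - l)) • w - averagedMap l f w ∈ C := by
    convert C.smul_mem hl0 h using 1
    simp only [averagedMap]
    module
  convert hf _ (mapsTo_averagedMap hl0 hl1 hmaps hw) w hw _ hc hgw using 1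
  simp only [averagedMap]
  module

lemma smul_map_averagedMap_sub_mem (hf : C.SubhomMonotoneOn f)
    (hmaps : MapsTo f (interior C) (interior C)) (hl0 : 0 ≤ l) (hl1 : l ≤ 1)
    (hw : w ∈ interior (C : Set X)) {b : ℝ} (hb : 1 ≤ b) (h : b • f w - w ∈ C) :
    (b • f (averagedMap l f w) - averagedMap l f w) - (1 - l) • (b • f w - w) ∈ C := by
  set d := l + (1 - l) * b
  have hd : 0 < d := by nlinarith
  have hdb : d ≤ b := by nlinarith
  have hgw : b • averagedMap l f w - d • w ∈ C := by
    convert C.smul_mem hl0 h using 1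
    simp only [averagedMap, d]
    module
  have hgw' : (b / d) • averagedMap l f w - w ∈ C := by
    convert C.smul_mem (inv_nonneg.2 hd.le) hgw using 1
    rw [smul_sub, smul_smul, smul_smul, inv_mul_cancel₀ hd.ne', one_smul, div_eq_inv_mul]
  have hfgw := C.smul_mem hd.le
    (hf w hw _ (mapsTo_averagedMap hl0 hl1 hmaps hw) _ ((one_le_div hd).2 hdb) hgw')
  convert hfgw using 1
  rw [smul_sub d, smul_smul d, mul_div_cancel₀ _ hd.ne']
  simp only [averagedMap, d]
  module

lemma map_iterate_averagedMap (ℓ : X →L[ℝ] ℝ) {κ : ℝ} {n : ℕ}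
    (h : ∀ j < n, ℓ (f ((averagedMap l f)^[j] z)) = κ * ℓ ((averagedMap l f)^[j] z)) :
    ℓ ((averagedMap l f)^[n] z) = (l * κ + (1 - l)) ^ n * ℓ z := by
  induction n with
  | zero => simp
  | succ n ih =>
    rw [Function.iterate_succ_apply', averagedMap, map_add, map_smul, map_smul, smul_eq_mul,
      smul_eq_mul, h n (Nat.lt_succ_self n), ih fun j hj => h j (hj.trans (Nat.lt_succ_self n)),
      pow_succ]
    ring

theorem exists_iterate_smul_sub_mem_interior (hl0 : 0 < l) (hl1 : l < 1) {a κ : ℝ} (hκ : κ ≠ 1)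
    (hstep : ∀ w ∈ interior (C : Set X), a • p w - q w ∈ C →
      (a • p (averagedMap l f w) - q (averagedMap l f w)) - (1 - l) • (a • p w - q w) ∈ C)
    (hℓ : ∀ (ℓ : X →L[ℝ] ℝ) w, ℓ (a • p w - q w) = 0 → ℓ (f w) = κ * ℓ w)
    (hz : z ∈ interior (C : Set X)) (hT : 0 < T)
    (hbdd : ∀ j, C.ThompsonNear T ((averagedMap l f)^[j] z) z)
    (hmem : ∀ j, a • p ((averagedMap l f)^[j] z) - q ((averagedMap l f)^[j] z) ∈ C) :
    ∃ j, a • p ((averagedMap l f)^[j] z) - q ((averagedMap l f)^[j] z) ∈ interior (C : Set X) := by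
  by_contra! hbdry
  set g := averagedMap l f
  have hc : l * κ + (1 - l) ≠ 1 := fun h => hκ (by nlinarith)
  obtain ⟨n, hn⟩ := exists_pow_notMem_Icc hc hT
  obtain ⟨ℓ, hℓC, hℓn, hℓz⟩ :=
    exists_dual_nonneg_eq_zero_of_notMem_interior (hmem n) (hbdry n) ⟨z, hz⟩
  have hvanish : ∀ j ≤ n, ℓ (a • p (g^[j] z) - q (g^[j] z)) = 0 := fun j hj => by
    refine eq_zero_of_mul_le_succ (sub_pos.2 hl1) (fun j => hℓC _ (hmem j)) (fun j => ?_) hℓn hj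
    have := hℓC _ (hstep _ ((hbdd j).mem_interior hT hz) (hmem j))
    rw [map_sub, map_smul, smul_eq_mul, ← Function.iterate_succ_apply' g] at this
    linarith
  have hgeom := map_iterate_averagedMap ℓ fun j hj => hℓ ℓ _ (hvanish j hj.le)
  have h1 := hℓC _ (hbdd n).1
  have h2 := hℓC _ (hbdd n).2
  simp only [map_sub, map_smul, smul_eq_mul] at h1 h2
  rw [hgeom] at h1 h2
  have hℓz' := hℓz z hz
  refine hn ⟨?_, ?_⟩
  · rw [inv_le_iff_one_le_mul₀' hT]
    nlinarith
  · nlinarith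

end Maps

section Gauge

variable {C : PointedCone ℝ X} {f p q : X → X} {l T : ℝ} {w x₀ z : X} {x : ℕ → X}

/-- The infimum over `k` of the gauges `inf {a ≥ 1 | q (x k) ≤ a • p (x k)}`; it is their limit
when they are nonincreasing. -/
noncomputable def limGauge (C : PointedCone ℝ X) (p q : X → X) (x : ℕ → X) : ℝ :=
  sInf {a | 1 ≤ a ∧ ∃ k, a • p (x k) - q (x k) ∈ C}

lemma one_le_limGauge (hne : ∃ a : ℝ, 1 ≤ a ∧ ∃ k, a • p (x k) - q (x k) ∈ C) :
    1 ≤ C.limGauge p q x :=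
  le_csInf hne fun _ ha => ha.1

lemma limGauge_smul_sub_mem (hC : IsClosed (C : Set X))
    (hinv : ∀ a : ℝ, 1 ≤ a → ∀ k, a • p (x k) - q (x k) ∈ C →
      a • p (x (k + 1)) - q (x (k + 1)) ∈ C)
    (hne : ∃ a : ℝ, 1 ≤ a ∧ ∃ k, a • p (x k) - q (x k) ∈ C) (hw : MapClusterPt w atTop x)
    (hp : ContinuousAt p w) (hq : ContinuousAt q w) :
    C.limGauge p q x • p w - q w ∈ C := by
  have hsub : {a | 1 ≤ a ∧ ∃ k, a • p (x k) - q (x k) ∈ C} ⊆ {a : ℝ | a • p w - q w ∈ C} := by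
    rintro a ⟨ha, k, hk⟩
    have hev : ∀ᶠ n in atTop, a • p (x n) - q (x n) ∈ C :=
      eventually_atTop.2 ⟨k, fun n hn => Nat.le_induction hk (fun n _ => hinv a ha n) n hn⟩
    exact hC.mem_of_mapClusterPt
      (hw.continuousAt_comp (f := fun v => a • p v - q v) ((hp.const_smul a).sub hq)) hev
  exact closure_minimal hsub (hC.preimage (by fun_prop))
    (csInf_mem_closure hne ⟨1, fun _ ha => ha.1⟩)

lemma limGauge_smul_sub_notMem_interior (hw : MapClusterPt w atTop x) (hp : ContinuousAt p w)
    (hq : ContinuousAt q w) (h1 : 1 < C.limGauge p q x) :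
    C.limGauge p q x • p w - q w ∉ interior (C : Set X) := by
  intro hint
  have hcont : Tendsto (fun a : ℝ => a • p w - q w) (𝓝 (C.limGauge p q x))
      (𝓝 (C.limGauge p q x • p w - q w)) := (by fun_prop : Continuous _).tendsto _
  obtain ⟨a, ha, ha1, ha_lt⟩ := (((hcont.eventually (isOpen_interior.mem_nhds hint)).filter_mono
    nhdsWithin_le_nhds).and (Ioo_mem_nhdsLT h1)).exists
  have hev : ∀ᶠ v in 𝓝 w, a • p v - q v ∈ C :=
    (((hp.const_smul a).sub hq).eventually (isOpen_interior.mem_nhds ha)).mono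
      fun _ hv => interior_subset hv
  obtain ⟨k, hk⟩ := (hw.frequently hev).exists
  exact ha_lt.not_ge (csInf_le ⟨1, fun _ hb => hb.1⟩ ⟨ha1.le, k, hk⟩)

theorem sub_mem_of_mapClusterPt (hC : IsClosed (C : Set X)) (hl0 : 0 < l) (hl1 : l < 1)
    (hmaps : MapsTo f (interior C) (interior C)) (hfc : ContinuousOn f (interior C))
    (hp : ContinuousOn p (interior C)) (hq : ContinuousOn q (interior C))
    (hstep : ∀ a : ℝ, 1 ≤ a → ∀ w ∈ interior (C : Set X), a • p w - q w ∈ C →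
      (a • p (averagedMap l f w) - q (averagedMap l f w)) - (1 - l) • (a • p w - q w) ∈ C)
    (hκ : ∀ a : ℝ, 1 < a → ∃ κ ≠ 1, ∀ (ℓ : X →L[ℝ] ℝ) w,
      ℓ (a • p w - q w) = 0 → ℓ (f w) = κ * ℓ w)
    (hx₀ : x₀ ∈ interior (C : Set X)) (hne : ∃ a : ℝ, 1 ≤ a ∧ a • p x₀ - q x₀ ∈ C)
    (hz : MapClusterPt z atTop fun k => (averagedMap l f)^[k] x₀)
    (hz_int : z ∈ interior (C : Set X)) (hT : 0 < T)
    (hbdd : ∀ j, C.ThompsonNear T ((averagedMap l f)^[j] z) z) : p z - q z ∈ C := by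
  have hgmaps := mapsTo_averagedMap hl0.le hl1.le hmaps
  have hcont : ∀ {φ : X → X}, ContinuousOn φ (interior C) → ∀ j,
      ContinuousAt φ ((averagedMap l f)^[j] z) :=
    fun h j => h.continuousAt (isOpen_interior.mem_nhds (hgmaps.iterate j hz_int))
  have hzj : ∀ j, MapClusterPt ((averagedMap l f)^[j] z) atTop
      fun k => (averagedMap l f)^[k] x₀ := fun j =>
    hz.iterate_orbit (((hfc.const_smul l).add (continuousOn_id.const_smul (1 - l))).iterate
      hgmaps j |>.continuousAt (isOpen_interior.mem_nhds hz_int))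
  have hinv : ∀ a : ℝ, 1 ≤ a → ∀ k,
      a • p ((averagedMap l f)^[k] x₀) - q ((averagedMap l f)^[k] x₀) ∈ C →
      a • p ((averagedMap l f)^[k + 1] x₀) - q ((averagedMap l f)^[k + 1] x₀) ∈ C :=
    fun a ha k h => by
      simpa [Function.iterate_succ_apply'] using
        C.add_mem (hstep a ha _ (hgmaps.iterate k hx₀) h) (C.smul_mem (sub_nonneg.2 hl1.le) h)
  obtain ⟨a₀, ha₀, h₀⟩ := hne
  have hne' : ∃ a : ℝ, 1 ≤ a ∧ ∃ k,
      a • p ((averagedMap l f)^[k] x₀) - q ((averagedMap l f)^[k] x₀) ∈ C := ⟨a₀, ha₀, 0, h₀⟩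
  have hmem := fun j => limGauge_smul_sub_mem hC hinv hne' (hzj j) (hcont hp j) (hcont hq j)
  have hone : C.limGauge p q (fun k => (averagedMap l f)^[k] x₀) = 1 := by
    refine le_antisymm (not_lt.1 fun h1 => ?_) (one_le_limGauge hne')
    obtain ⟨κ, hκ1, hℓ⟩ := hκ _ h1
    obtain ⟨j, hj⟩ := exists_iterate_smul_sub_mem_interior hl0 hl1 hκ1 (hstep _ h1.le) hℓ hz_int
      hT hbdd hmem
    exact limGauge_smul_sub_notMem_interior (hzj j) (hcont hp j) (hcont hq j) h1 hj
  simpa [hone] using hmem 0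

end Gauge

section FixedPoint

variable [FiniteDimensional ℝ X] {C : PointedCone ℝ X} {f : X → X} {l T : ℝ} {x₀ z : X}

theorem isFixedPt_of_mapClusterPt (hC : IsClosed (C : Set X))
    (hCs : (C : ConvexCone ℝ X).Salient) (hf : C.SubhomMonotoneOn f)
    (hmaps : MapsTo f (interior C) (interior C)) (hl0 : 0 < l) (hl1 : l < 1)
    (hx₀ : x₀ ∈ interior (C : Set X)) (hz : MapClusterPt z atTop fun k => (averagedMap l f)^[k] x₀)
    (hz_int : z ∈ interior (C : Set X)) (hT : 0 < T)
    (hbdd : ∀ j, C.ThompsonNear T ((averagedMap l f)^[j] z) z) : f z = z := by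
  have hfc := hf.continuousOn hC hCs hmaps
  obtain ⟨t, ht, hxt⟩ := exists_thompsonNear hx₀ (hmaps hx₀)
  have hle : z - f z ∈ C := sub_mem_of_mapClusterPt (p := id) hC hl0 hl1 hmaps hfc
    continuousOn_id hfc (fun a ha w hw h => smul_sub_averagedMap_mem hf hmaps hl0.le hl1.le hw ha h)
    (fun a ha => ⟨a, ha.ne', fun ℓ w h => by
      simp only [id, map_sub, map_smul, smul_eq_mul] at h
      linarith⟩)
    hx₀ ⟨t, ht, hxt.2⟩ hz hz_int hT hbdd
  have hge : f z - z ∈ C := sub_mem_of_mapClusterPt (q := id) hC hl0 hl1 hmaps hfc hfc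
    continuousOn_id (fun b hb w hw h => smul_map_averagedMap_sub_mem hf hmaps hl0.le hl1.le hw hb h)
    (fun b hb => ⟨b⁻¹, inv_ne_one.2 hb.ne', fun ℓ w h => by
      simp only [id, map_sub, map_smul, smul_eq_mul, sub_eq_zero] at h
      field_simp
      linarith⟩)
    hx₀ ⟨t, ht, hxt.1⟩ hz hz_int hT hbdd
  by_contra hne
  exact hCs _ hge (sub_ne_zero.2 hne) (by rwa [neg_sub])

theorem exists_tendsto_iterate_averagedMap (hC : IsClosed (C : Set X))
    (hCs : (C : ConvexCone ℝ X).Salient) (hf : C.SubhomMonotoneOn f)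
    (hmaps : MapsTo f (interior C) (interior C)) {u : X} (hu : u ∈ interior (C : Set X))
    (hfu : f u = u) (hl0 : 0 < l) (hl1 : l < 1) {x : X} (hx : x ∈ interior (C : Set X)) :
    ∃ v ∈ interior (C : Set X), f v = v ∧
      Tendsto (fun k => (averagedMap l f)^[k] x) atTop (𝓝 v) := by
  set g := averagedMap l f
  obtain ⟨t, ht, hxu⟩ := exists_thompsonNear hx hu
  have horbit : ∀ k, C.ThompsonNear t (g^[k] x) u :=
    hxu.iterate_averagedMap hf hmaps hl0.le hl1.le hu hfu ht hx
  obtain ⟨z, hzu, hz⟩ : ∃ z ∈ {y | C.ThompsonNear t y u}, MapClusterPt z atTop fun k => g^[k] x :=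
    (isCompact_setOf_thompsonNear hC hCs (by positivity) (interior_subset hu)).exists_mapClusterPt
      (tendsto_principal.2 (.of_forall horbit))
  have hz_int : z ∈ interior (C : Set X) := hzu.mem_interior (by positivity) hu
  have hfz : f z = z := isFixedPt_of_mapClusterPt hC hCs hf hmaps hl0 hl1 hx hz hz_int
    (by positivity) fun j => (hzu.iterate_averagedMap hf hmaps hl0.le hl1.le hu hfu ht hz_int
      j).trans (by positivity) (by positivity) hzu.symm
  refine ⟨z, hz_int, hfz, tendsto_of_forall_thompsonNear hC hCs (interior_subset hz_int)
    fun s hs => ?_⟩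
  obtain ⟨k, hk⟩ := (hz.frequently (eventually_thompsonNear_nhds hz_int hs)).exists
  have hk' := hk.iterate_averagedMap hf hmaps hl0.le hl1.le hz_int hfz hs.le
    ((mapsTo_averagedMap hl0.le hl1.le hmaps).iterate k hx)
  refine eventually_atTop.2 ⟨k, fun n hn => ?_⟩
  obtain ⟨j, rfl⟩ := Nat.exists_eq_add_of_le hn
  rw [add_comm, Function.iterate_add_apply]
  exact hk' j

end FixedPoint

end PointedCone

def pointedConeOfConvex (C : Set X) (hconv : Convex ℝ C)
    (hsmul : ∀ x ∈ C, ∀ t : ℝ, 0 ≤ t → t • x ∈ C) (h0 : (0 : X) ∈ C) : PointedCone ℝ X where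
  carrier := C
  add_mem' {x y} hx hy := by
    simpa [smul_add, smul_smul] using hsmul _ (hconv hx hy (by norm_num : (0 : ℝ) ≤ 1 / 2)
      (by norm_num : (0 : ℝ) ≤ 1 / 2) (by norm_num)) 2 (by norm_num)
  zero_mem' := h0
  smul_mem' c x hx := hsmul x hx c c.2

end

theorem averaged_iterates_converge_general
    {X : Type*} [NormedAddCommGroup X] [NormedSpace ℝ X] [FiniteDimensional ℝ X]
    (C : Set X) (hC_closed : IsClosed C) (hC_convex : Convex ℝ C)
    (hC_cone : ∀ x ∈ C, ∀ t : ℝ, 0 ≤ t → t • x ∈ C)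
    (hC_pointed : ∀ x, x ∈ C → -x ∈ C → x = 0)
    (f : X → X)
    (hf_maps : ∀ x ∈ interior C, f x ∈ interior C)
    (hf_mono : ∀ x ∈ interior C, ∀ y ∈ interior C, y - x ∈ C → f y - f x ∈ C)
    (hf_subhom : ∀ x ∈ interior C, ∀ t : ℝ, 1 ≤ t → t • f x - f (t • x) ∈ C)
    (u : X) (hu : u ∈ interior C) (hfu : f u = u)
    (l : ℝ) (hl0 : 0 < l) (hl1 : l < 1) :
    ∀ x ∈ interior C,
      ∃ v ∈ interior C, f v = v ∧
        Tendsto (fun k => (fun z => l • f z + (1 - l) • z)^[k] x) atTop (𝓝 v) := by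
  intro x hx
  let K := pointedConeOfConvex C hC_convex hC_cone
    (by simpa using hC_cone u (interior_subset hu) 0 le_rfl)
  exact PointedCone.exists_tendsto_iterate_averagedMap (C := K) hC_closed
    (fun x hx hx0 hnx => hx0 (hC_pointed x hx hnx))
    (PointedCone.subhomMonotoneOn_of_monotone_of_subhom hf_mono hf_subhom)
    (fun x hx => hf_maps x hx) hu hfu hl0 hl1 hx

/-- Let C be a closed cone with nonempty interior in a finite-dimensional real
Banach space, let f : int C → int C be order-preserving and subhomogeneous, and suppose f has
a fixed point in int C. For 0 < λ < 1 let f_λ := λf + (1 − λ)·id. Then for every x ∈ int C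
the sequence f_λ^k(x) converges to a fixed point of f. -/
theorem averaged_iterates_converge
    {X : Type*} [NormedAddCommGroup X] [NormedSpace ℝ X] [FiniteDimensional ℝ X]
    (C : Set X) (hC_closed : IsClosed C) (hC_convex : Convex ℝ C)
    (hC_cone : ∀ x ∈ C, ∀ t : ℝ, 0 ≤ t → t • x ∈ C)
    (hC_pointed : ∀ x, x ∈ C → -x ∈ C → x = 0)
    (hC_int : (interior C).Nonempty)
    (f : X → X)
    (hf_maps : ∀ x ∈ interior C, f x ∈ interior C)
    (hf_mono : ∀ x ∈ interior C, ∀ y ∈ interior C, y - x ∈ C → f y - f x ∈ C)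
    (hf_subhom : ∀ x ∈ interior C, ∀ t : ℝ, 1 ≤ t → t • f x - f (t • x) ∈ C)
    (u : X) (hu : u ∈ interior C) (hfu : f u = u)
    (l : ℝ) (hl0 : 0 < l) (hl1 : l < 1) :
    ∀ x ∈ interior C,
      ∃ v ∈ interior C, f v = v ∧
        Tendsto (fun k => (fun z => l • f z + (1 - l) • z)^[k] x) atTop (𝓝 v) :=
  averaged_iterates_converge_general C hC_closed hC_convex hC_cone hC_pointed f hf_maps hf_mono
    hf_subhom u hu hfu l hl0 hl1
end

section
/- Let C be a normal closed cone with nonempty interior in a real Banach space. Let f : int C → int C be order-preserving and homogeneous, and suppose f has an eigenvector in int C. Let g(x) := f(x)/‖f(x)‖ for x ∈ int C. Then for any x ∈ int C, the closure of the orbit of x under the map r_C(f)^{-1} f is compact if and only if the closure of the orbit of x under g is compact. -/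
/-!
The eigenvalue of the eigenvector `u` must be the growth rate `r`, so `T = r⁻¹ f` fixes the ray
through `u`. As `x` and `u` are interior points, `α u ≤ x ≤ β u` for some `α, β > 0`, and since `T`
is order-preserving, the whole `T`-orbit of `x` stays in this order interval; by normality the
norms `‖Tᵏ x‖` then lie in a compact interval `[m, M] ⊂ (0, ∞)`. By homogeneity the orbit of `g`
is, from the first step on, the normalized `T`-orbit, and rescaling a sequence by scalars from a
compact set preserves relative compactness of its range.
-/

open Filter Topology Set Pointwise

theorem isCompact_closure_range_succ_iff {X : Type*} [TopologicalSpace X] [T2Space X]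
    (a : ℕ → X) :
    IsCompact (closure (range fun k => a (k + 1))) ↔ IsCompact (closure (range a)) := by
  refine ⟨fun h => (h.insert (a 0)).closure_of_subset ?_, fun h =>
    h.of_isClosed_subset isClosed_closure (closure_mono ?_)⟩
  · rintro _ ⟨_ | k, rfl⟩
    exacts [mem_insert _ _, mem_insert_of_mem _ (subset_closure ⟨k, rfl⟩)]
  · rintro _ ⟨k, rfl⟩
    exact ⟨k + 1, rfl⟩

theorem IsCompact.closure_range_smul {ι M X : Type*} [TopologicalSpace M] [TopologicalSpace X]
    [T2Space X] [SMul M X] [ContinuousSMul M X] {K : Set M} (hK : IsCompact K) {c : ι → M}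
    (hc : ∀ i, c i ∈ K) {a : ι → X} (ha : IsCompact (closure (range a))) :
    IsCompact (closure (range fun i => c i • a i)) :=
  (hK.smul_set ha).closure_of_subset <| by
    rintro _ ⟨i, rfl⟩
    exact smul_mem_smul (hc i) (subset_closure ⟨i, rfl⟩)

theorem isCompact_closure_range_iff_normalize {ι E : Type*} [NormedAddCommGroup E]
    [NormedSpace ℝ E] {a : ι → E} {m M : ℝ} (hm : 0 < m) (ha : ∀ i, ‖a i‖ ∈ Icc m M) :
    IsCompact (closure (range a)) ↔ IsCompact (closure (range fun i => ‖a i‖⁻¹ • a i)) := by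
  have hpos : ∀ i, 0 < ‖a i‖ := fun i => hm.trans_le (ha i).1
  refine ⟨fun h => (isCompact_Icc (a := M⁻¹) (b := m⁻¹)).closure_range_smul
    (fun i => ⟨inv_anti₀ (hpos i) (ha i).2, inv_anti₀ hm (ha i).1⟩) h, fun h => ?_⟩
  convert isCompact_Icc.closure_range_smul ha h using 4 with i
  rw [smul_inv_smul₀ (hpos i).ne']

theorem inv_norm_smul_smul_of_pos {E : Type*} [NormedAddCommGroup E] [NormedSpace ℝ E] {c : ℝ}
    (hc : 0 < c) (y : E) : ‖c • y‖⁻¹ • c • y = ‖y‖⁻¹ • y := by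
  rw [norm_smul, Real.norm_of_nonneg hc.le, smul_smul, mul_inv, mul_right_comm,
    inv_mul_cancel₀ hc.ne', one_mul]

theorem tendsto_norm_pow_smul_rpow_inv {E : Type*} [NormedAddCommGroup E] [NormedSpace ℝ E]
    {μ : ℝ} (hμ : 0 < μ) {u : E} (hu : u ≠ 0) :
    Tendsto (fun k : ℕ => ‖μ ^ k • u‖ ^ (k : ℝ)⁻¹) atTop (𝓝 μ) := by
  have hroot : Tendsto (fun k : ℕ => ‖u‖ ^ (k : ℝ)⁻¹) atTop (𝓝 1) := by
    simpa using tendsto_const_nhds.rpow tendsto_inv_atTop_nhds_zero_nat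
      (Or.inl (norm_ne_zero_iff.mpr hu))
  refine (by simpa using hroot.const_mul μ : Tendsto _ _ (𝓝 μ)).congr' ?_
  filter_upwards [eventually_ne_atTop 0] with k hk
  rw [norm_smul, Real.norm_of_nonneg (pow_nonneg hμ.le k),
    Real.mul_rpow (pow_nonneg hμ.le k) (norm_nonneg u), Real.pow_rpow_inv_natCast hμ.le hk]

section Homogeneous

variable {E : Type*} [NormedAddCommGroup E] [NormedSpace ℝ E] {f : E → E} {S : Set E}

theorem iterate_eq_pow_smul_of_eq_smul {u : E}
    (hf_hom : ∀ t : ℝ, 0 < t → f (t • u) = t • f u) {μ : ℝ} (hμ : 0 < μ) (hfu : f u = μ • u)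
    (k : ℕ) : f^[k] u = μ ^ k • u := by
  induction k with
  | zero => simp
  | succ k ih =>
    rw [Function.iterate_succ_apply', ih, hf_hom _ (pow_pos hμ k), hfu, smul_smul, pow_succ]

theorem limsup_norm_iterate_rpow_inv_eq_of_eq_smul {u : E}
    (hf_hom : ∀ t : ℝ, 0 < t → f (t • u) = t • f u) {μ : ℝ} (hμ : 0 < μ) (hu : u ≠ 0)
    (hfu : f u = μ • u) : limsup (fun k : ℕ => ‖f^[k] u‖ ^ (k : ℝ)⁻¹) atTop = μ := by
  simp only [iterate_eq_pow_smul_of_eq_smul hf_hom hμ hfu]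
  exact (tendsto_norm_pow_smul_rpow_inv hμ hu).limsup_eq

theorem iterate_const_smul_comp (hf_maps : MapsTo f S S)
    (hf_hom : ∀ x ∈ S, ∀ t : ℝ, 0 < t → f (t • x) = t • f x) {c : ℝ} (hc : 0 < c) {x : E}
    (hx : x ∈ S) (k : ℕ) : (fun z => c • f z)^[k] x = c ^ k • f^[k] x := by
  induction k with
  | zero => simp
  | succ k ih =>
    rw [Function.iterate_succ_apply', ih, Function.iterate_succ_apply',
      hf_hom _ (hf_maps.iterate k hx) _ (pow_pos hc k), smul_smul, pow_succ']

theorem iterate_succ_normalized_comp (hf_maps : MapsTo f S S)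
    (hf_hom : ∀ x ∈ S, ∀ t : ℝ, 0 < t → f (t • x) = t • f x) (hS : (0 : E) ∉ S) {x : E}
    (hx : x ∈ S) (k : ℕ) :
    (fun z => ‖f z‖⁻¹ • f z)^[k + 1] x = ‖f^[k + 1] x‖⁻¹ • f^[k + 1] x := by
  induction k with
  | zero => simp
  | succ k ih =>
    have hy : f^[k + 1] x ∈ S := hf_maps.iterate (k + 1) hx
    have hc : 0 < ‖f^[k + 1] x‖⁻¹ := inv_pos.mpr (norm_pos_iff.mpr (ne_of_mem_of_not_mem hy hS))
    rw [Function.iterate_succ_apply', ih, hf_hom _ hy _ hc, inv_norm_smul_smul_of_pos hc,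
      ← Function.iterate_succ_apply' f]

end Homogeneous

theorem iterate_mem_orderInterval {X : Type*} [Sub X] {C S : Set X} {T : X → X}
    (hT_maps : MapsTo T S S)
    (hT_mono : ∀ x ∈ S, ∀ y ∈ S, y - x ∈ C → T y - T x ∈ C) {a b x : X}
    (ha : a ∈ S) (hb : b ∈ S) (hTa : T a = a) (hTb : T b = b) (hx : x ∈ S)
    (hax : x - a ∈ C) (hxb : b - x ∈ C) (k : ℕ) :
    T^[k] x - a ∈ C ∧ b - T^[k] x ∈ C := by
  induction k with
  | zero => exact ⟨hax, hxb⟩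
  | succ k ih =>
    have hk : T^[k] x ∈ S := hT_maps.iterate k hx
    rw [Function.iterate_succ_apply']
    exact ⟨hTa ▸ hT_mono a ha _ hk ih.1, hTb ▸ hT_mono _ hk b hb ih.2⟩

section Cone

variable {X : Type*} [NormedAddCommGroup X] [NormedSpace ℝ X] {C : Set X}

theorem smul_mem_interior_of_cone (hC_cone : ∀ x ∈ C, ∀ t : ℝ, 0 ≤ t → t • x ∈ C) {t : ℝ}
    (ht : 0 < t) {z : X} (hz : z ∈ interior C) : t • z ∈ interior C := by
  have hsub : t • C ⊆ C := by
    rintro _ ⟨y, hy, rfl⟩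
    exact hC_cone y hy t ht.le
  exact interior_mono hsub (interior_smul₀ ht.ne' C ▸ smul_mem_smul_set hz)

theorem zero_notMem_interior_of_pointed [Nontrivial X]
    (hC_pointed : ∀ x, x ∈ C → -x ∈ C → x = 0) : (0 : X) ∉ interior C := by
  intro h0
  have hC : C ∈ 𝓝 (0 : X) := mem_interior_iff_mem_nhds.mp h0
  have hC' : C ∩ -C ∈ 𝓝[≠] (0 : X) :=
    mem_nhdsWithin_of_mem_nhds (inter_mem hC (neg_mem_nhds_zero X hC))
  obtain ⟨y, ⟨hy, hy'⟩, hy0⟩ := Filter.nonempty_of_mem (inter_mem hC' self_mem_nhdsWithin)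
  exact hy0 (hC_pointed y hy hy')

theorem exists_pos_sub_smul_mem_of_mem_interior {x : X} (hx : x ∈ interior C) (v : X) :
    ∃ t : ℝ, 0 < t ∧ x - t • v ∈ C := by
  have hcont : Tendsto (fun t : ℝ => x - t • v) (𝓝 0) (𝓝 x) := by
    have hc : Continuous fun t : ℝ => x - t • v := by fun_prop
    simpa using hc.tendsto 0
  have hev : ∀ᶠ t in 𝓝[>] (0 : ℝ), x - t • v ∈ C :=
    nhdsWithin_le_nhds (hcont (mem_interior_iff_mem_nhds.mp hx))
  exact (eventually_mem_nhdsWithin.and hev).exists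

theorem exists_norm_iterate_mem_Icc (hC_cone : ∀ x ∈ C, ∀ t : ℝ, 0 ≤ t → t • x ∈ C)
    {κ : ℝ} (hκ : 0 < κ) (hC_normal : ∀ x y : X, x ∈ C → y - x ∈ C → ‖x‖ ≤ κ * ‖y‖)
    {T : X → X} (hT_maps : MapsTo T (interior C) (interior C))
    (hT_mono : ∀ x ∈ interior C, ∀ y ∈ interior C, y - x ∈ C → T y - T x ∈ C)
    {u : X} (hu : u ∈ interior C) (hu0 : u ≠ 0) (hTu : ∀ t : ℝ, 0 < t → T (t • u) = t • u)
    {x : X} (hx : x ∈ interior C) :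
    ∃ m M : ℝ, 0 < m ∧ ∀ k, ‖T^[k] x‖ ∈ Icc m M := by
  obtain ⟨α, hα, hαx⟩ := exists_pos_sub_smul_mem_of_mem_interior hx u
  obtain ⟨γ, hγ, hγu⟩ := exists_pos_sub_smul_mem_of_mem_interior hu x
  have hβ : 0 < γ⁻¹ := inv_pos.mpr hγ
  have hβx : γ⁻¹ • u - x ∈ C := by
    simpa [smul_sub, smul_smul, hγ.ne'] using hC_cone _ hγu γ⁻¹ hβ.le
  have hαu := smul_mem_interior_of_cone hC_cone hα hu
  have hβu := smul_mem_interior_of_cone hC_cone hβ hu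
  have hupos : 0 < ‖u‖ := norm_pos_iff.mpr hu0
  refine ⟨α * ‖u‖ / κ, κ * (γ⁻¹ * ‖u‖), by positivity, fun k => ?_⟩
  obtain ⟨hlow, hup⟩ := iterate_mem_orderInterval hT_maps hT_mono hαu hβu (hTu α hα)
    (hTu _ hβ) hx hαx hβx k
  have h1 := hC_normal _ _ (interior_subset hαu) hlow
  have h2 := hC_normal _ _ (interior_subset (hT_maps.iterate k hx)) hup
  rw [norm_smul, Real.norm_of_nonneg hα.le] at h1
  rw [norm_smul, Real.norm_of_nonneg hβ.le] at h2
  exact ⟨(div_le_iff₀' hκ).mpr h1, h2⟩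

theorem exists_norm_iterate_inv_smul_comp_mem_Icc
    (hC_cone : ∀ x ∈ C, ∀ t : ℝ, 0 ≤ t → t • x ∈ C)
    {κ : ℝ} (hκ : 0 < κ) (hC_normal : ∀ x y : X, x ∈ C → y - x ∈ C → ‖x‖ ≤ κ * ‖y‖)
    {f : X → X} (hf_maps : MapsTo f (interior C) (interior C))
    (hf_mono : ∀ x ∈ interior C, ∀ y ∈ interior C, y - x ∈ C → f y - f x ∈ C)
    (hf_hom : ∀ x ∈ interior C, ∀ t : ℝ, 0 < t → f (t • x) = t • f x)
    {u : X} (hu : u ∈ interior C) (hu0 : u ≠ 0) {μ : ℝ} (hμ : 0 < μ) (hfu : f u = μ • u)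
    {x : X} (hx : x ∈ interior C) :
    ∃ m M : ℝ, 0 < m ∧ ∀ k, ‖(fun z => μ⁻¹ • f z)^[k] x‖ ∈ Icc m M := by
  have hμ_inv : 0 < μ⁻¹ := inv_pos.mpr hμ
  refine exists_norm_iterate_mem_Icc hC_cone hκ hC_normal
    (fun z hz => smul_mem_interior_of_cone hC_cone hμ_inv (hf_maps hz)) ?_ hu hu0 ?_ hx
  · intro z hz y hy hzy
    simpa [← smul_sub] using hC_cone _ (hf_mono z hz y hy hzy) _ hμ_inv.le
  · intro t ht
    simp [hf_hom u hu t ht, hfu, smul_smul, hμ.ne', mul_comm]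

end Cone

theorem orbit_compact_iff_normalized_orbit_compact_general
    {X : Type*} [NormedAddCommGroup X] [NormedSpace ℝ X]
    (C : Set X)
    (hC_cone : ∀ x ∈ C, ∀ t : ℝ, 0 ≤ t → t • x ∈ C)
    (hC_pointed : ∀ x, x ∈ C → -x ∈ C → x = 0)
    (hC_normal : ∃ κ > 0, ∀ x y : X, x ∈ C → y - x ∈ C → ‖x‖ ≤ κ * ‖y‖)
    (f : X → X)
    (hf_maps : ∀ x ∈ interior C, f x ∈ interior C)
    (hf_mono : ∀ x ∈ interior C, ∀ y ∈ interior C, y - x ∈ C → f y - f x ∈ C)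
    (hf_hom : ∀ x ∈ interior C, ∀ t : ℝ, 0 < t → f (t • x) = t • f x)
    (hf_eig : ∃ u ∈ interior C, ∃ μ > 0, f u = μ • u)
    -- the cone spectral radius r = r_C(f), which is positive and independent of the base point
    (r : ℝ)
    (hr : ∀ y ∈ interior C, limsup (fun k => ‖f^[k] y‖ ^ ((k : ℝ)⁻¹)) atTop = r)
    (x : X) (hx : x ∈ interior C) :
    IsCompact (closure (Set.range fun k => (fun z => r⁻¹ • f z)^[k] x)) ↔
      IsCompact (closure (Set.range fun k => (fun z => ‖f z‖⁻¹ • f z)^[k] x)) := by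
  rcases subsingleton_or_nontrivial X with hX | hX
  · exact iff_of_true (Set.toFinite _).isCompact (Set.toFinite _).isCompact
  obtain ⟨κ, hκ, hC_normal⟩ := hC_normal
  obtain ⟨u, hu, μ, hμ, hfu⟩ := hf_eig
  have h0 : (0 : X) ∉ interior C := zero_notMem_interior_of_pointed hC_pointed
  have hu0 : u ≠ 0 := ne_of_mem_of_not_mem hu h0
  have hμ' : (0 : ℝ) < μ := Nat.cast_pos.mpr hμ
  have hfu' : f u = (μ : ℝ) • u := by rw [hfu, Nat.cast_smul_eq_nsmul]
  obtain rfl : (μ : ℝ) = r :=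
    (limsup_norm_iterate_rpow_inv_eq_of_eq_smul (hf_hom u hu) hμ' hu0 hfu').symm.trans (hr u hu)
  obtain ⟨m, M, hm, hbound⟩ := exists_norm_iterate_inv_smul_comp_mem_Icc hC_cone hκ hC_normal
    hf_maps hf_mono hf_hom hu hu0 hμ' hfu' hx
  have hμ_inv : (0 : ℝ) < (μ : ℝ)⁻¹ := inv_pos.mpr hμ'
  have hg : ∀ k, (fun z => ‖f z‖⁻¹ • f z)^[k + 1] x =
      ‖(fun z => (μ : ℝ)⁻¹ • f z)^[k + 1] x‖⁻¹ • (fun z => (μ : ℝ)⁻¹ • f z)^[k + 1] x :=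
    fun k => by
      rw [iterate_succ_normalized_comp hf_maps hf_hom h0 hx,
        iterate_const_smul_comp hf_maps hf_hom hμ_inv hx,
        inv_norm_smul_smul_of_pos (pow_pos hμ_inv _)]
  rw [← isCompact_closure_range_succ_iff, ← isCompact_closure_range_succ_iff (fun k => _^[k] x)]
  simp only [hg]
  exact isCompact_closure_range_iff_normalize hm fun k => hbound (k + 1)

/-- Let C be a normal closed cone with nonempty interior in a real Banach space.
Let f : int C → int C be order-preserving and homogeneous, and suppose f has an eigenvector in
int C. Let g(x) := f(x)/‖f(x)‖. Then for any x ∈ int C, the closure of the orbit of x under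
the map r_C(f)⁻¹ f is compact iff the closure of the orbit of x under g is compact. -/
theorem orbit_compact_iff_normalized_orbit_compact
    {X : Type*} [NormedAddCommGroup X] [NormedSpace ℝ X] [CompleteSpace X]
    (C : Set X) (hC_closed : IsClosed C) (hC_convex : Convex ℝ C)
    (hC_cone : ∀ x ∈ C, ∀ t : ℝ, 0 ≤ t → t • x ∈ C)
    (hC_pointed : ∀ x, x ∈ C → -x ∈ C → x = 0)
    (hC_int : (interior C).Nonempty)
    (hC_normal : ∃ κ > 0, ∀ x y : X, x ∈ C → y - x ∈ C → ‖x‖ ≤ κ * ‖y‖)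
    (f : X → X)
    (hf_maps : ∀ x ∈ interior C, f x ∈ interior C)
    (hf_mono : ∀ x ∈ interior C, ∀ y ∈ interior C, y - x ∈ C → f y - f x ∈ C)
    (hf_hom : ∀ x ∈ interior C, ∀ t : ℝ, 0 < t → f (t • x) = t • f x)
    (hf_eig : ∃ u ∈ interior C, ∃ μ > 0, f u = μ • u)
    -- the cone spectral radius r = r_C(f), which is positive and independent of the base point
    (r : ℝ) (hr_pos : 0 < r)
    (hr : ∀ y ∈ interior C, limsup (fun k => ‖f^[k] y‖ ^ ((k : ℝ)⁻¹)) atTop = r)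
    (x : X) (hx : x ∈ interior C) :
    IsCompact (closure (Set.range fun k => (fun z => r⁻¹ • f z)^[k] x)) ↔
      IsCompact (closure (Set.range fun k => (fun z => ‖f z‖⁻¹ • f z)^[k] x)) :=
  orbit_compact_iff_normalized_orbit_compact_general C hC_cone hC_pointed hC_normal f hf_maps
    hf_mono hf_hom hf_eig r hr x hx
end

section
/- Let C be a closed cone with nonempty interior in a finite-dimensional real Banach space. Let f : int C → int C be order-preserving, subhomogeneous, and piecewise affine. If for some x ∈ int C the sequence f^k(x) converges to a fixed point u ∈ int C, then there exist m ∈ ℕ and 0 < γ < 1 such that ‖f^{k+m}(x) − u‖ ≤ γ‖f^k(x) − u‖ for all sufficiently large k ∈ ℕ. -/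
open Filter Topology

def PiecewiseAffineOn {X : Type*} [NormedAddCommGroup X] [NormedSpace ℝ X]
    (M : Set X) (f : X → X) : Prop :=
  ∃ (m : ℕ) (P : Fin m → Set X),
    M ⊆ ⋃ i, P i ∧
    (∀ i, IsClosed (P i) ∧ Convex ℝ (P i)) ∧
    (∀ i, ∃ (A : X →ₗ[ℝ] X) (b : X), ∀ x ∈ P i ∩ M, f x = A x + b)

/-!
The order-unit norm `‖·‖_u` of the cone is equivalent to the norm, and an order-preserving
subhomogeneous map preserves mutual bounds `P ≤ λ Q`, `Q ≤ λ P` (it is Thompson-nonexpansive).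
Near the fixed point `u` the piecewise affine map is affine on every segment starting at `u`,
so along the orbit it sends `u + s y_k` to `u + s y_{k+1}` for `s ∈ [0, 1]`, where
`y_k = f^k x - u`. If no fixed number of steps contracted the errors `y_k` uniformly,
compactness of the normalized errors would produce a late error `y_q` and an earlier one `y_p`
with `y_q ≈ s y_p` for a small `s`; since `u + y_q` and `u + s y_p` stay mutually bounded along
their orbits and `s y_{p+t}` is tiny, `y_{q+t}` would be tiny too, contradicting the choice
of `q`.
-/

open scoped Pointwise

section OrderUnitNorm

variable {X : Type*} [NormedAddCommGroup X] [NormedSpace ℝ X]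

theorem PointedCone.smul_mem_interior_s9 {K : PointedCone ℝ X} {x : X}
    (hx : x ∈ interior (K : Set X)) {t : ℝ} (ht : 0 < t) : t • x ∈ interior (K : Set X) := by
  have h : t • x ∈ interior (t • (K : Set X)) := by
    rw [interior_smul₀ ht.ne']
    exact Set.smul_mem_smul_set hx
  refine interior_mono ?_ h
  rintro _ ⟨v, hv, rfl⟩
  exact K.smul_mem ht.le hv

def orderInterval (K : PointedCone ℝ X) (u : X) : Set X :=
  {v | u - v ∈ K ∧ u + v ∈ K}

/-- The order-unit norm `‖w‖_u = inf {s ≥ 0 | -s u ≤ w ≤ s u}`, as the gauge of `[-u, u]`. -/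
noncomputable def orderUnitNorm (K : PointedCone ℝ X) (u w : X) : ℝ :=
  gauge (orderInterval K u) w

variable {K : PointedCone ℝ X} {u : X}

theorem convex_orderInterval : Convex ℝ (orderInterval K u) := by
  intro v hv w hw a b ha hb hab
  obtain rfl : b = 1 - a := by linarith
  constructor
  · convert K.add_mem (K.smul_mem ha hv.1) (K.smul_mem hb hw.1) using 1
    module
  · convert K.add_mem (K.smul_mem ha hv.2) (K.smul_mem hb hw.2) using 1
    module

theorem neg_mem_orderInterval {v : X} (hv : v ∈ orderInterval K u) :
    -v ∈ orderInterval K u := by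
  simpa [orderInterval, sub_eq_add_neg, and_comm] using hv

theorem exists_ball_subset_orderInterval (hu : u ∈ interior (K : Set X)) :
    ∃ r > 0, Metric.ball 0 r ⊆ orderInterval K u := by
  obtain ⟨r, hr, hball⟩ := Metric.mem_nhds_iff.mp (mem_interior_iff_mem_nhds.mp hu)
  refine ⟨r, hr, fun v hv => ⟨hball ?_, hball ?_⟩⟩ <;>
    simpa [dist_eq_norm] using hv

theorem orderInterval_mem_nhds (hu : u ∈ interior (K : Set X)) :
    orderInterval K u ∈ 𝓝 0 := by
  obtain ⟨r, hr, hball⟩ := exists_ball_subset_orderInterval hu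
  exact Metric.mem_nhds_iff.mpr ⟨r, hr, hball⟩

theorem orderUnitNorm_nonneg (w : X) : 0 ≤ orderUnitNorm K u w :=
  gauge_nonneg w

theorem orderUnitNorm_smul {t : ℝ} (ht : 0 ≤ t) (w : X) :
    orderUnitNorm K u (t • w) = t * orderUnitNorm K u w :=
  gauge_smul_of_nonneg ht w

theorem orderUnitNorm_neg (w : X) : orderUnitNorm K u (-w) = orderUnitNorm K u w :=
  gauge_neg (fun _ => neg_mem_orderInterval) w

theorem orderUnitNorm_sub_comm (v w : X) :
    orderUnitNorm K u (v - w) = orderUnitNorm K u (w - v) := by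
  rw [← neg_sub, orderUnitNorm_neg]

theorem continuous_orderUnitNorm (hu : u ∈ interior (K : Set X)) :
    Continuous (orderUnitNorm K u) :=
  continuous_gauge convex_orderInterval (orderInterval_mem_nhds hu)

theorem exists_orderUnitNorm_le_norm (hu : u ∈ interior (K : Set X)) :
    ∃ R > 0, ∀ w, orderUnitNorm K u w ≤ R * ‖w‖ := by
  obtain ⟨r, hr, hball⟩ := exists_ball_subset_orderInterval hu
  refine ⟨r⁻¹, inv_pos.mpr hr, fun w => ?_⟩
  rw [← div_eq_inv_mul, le_div_iff₀' hr]
  exact mul_gauge_le_norm hball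

/-- Since `K` is closed, the infimum defining the order-unit norm is attained. -/
theorem orderUnitNorm_le_iff (hK : IsClosed (K : Set X)) (hu : u ∈ interior (K : Set X))
    {w : X} {s : ℝ} (hs : 0 ≤ s) :
    orderUnitNorm K u w ≤ s ↔ s • u - w ∈ K ∧ s • u + w ∈ K := by
  have huK : u ∈ K := interior_subset hu
  constructor
  · intro hle
    let T : Set ℝ := {t | t • u - w ∈ K ∧ t • u + w ∈ K}
    have hT : IsClosed T :=
      (hK.preimage (by fun_prop)).inter (hK.preimage (by fun_prop))
    have hgt : Set.Ioi (orderUnitNorm K u w) ⊆ T := by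
      intro t ht
      obtain ⟨b, hb, hbt, v, hv, rfl⟩ :=
        exists_lt_of_gauge_lt (absorbent_nhds_zero (orderInterval_mem_nhds hu)) ht
      have hc : (t - b) • u ∈ K := K.smul_mem (by linarith) huK
      constructor
      · convert K.add_mem hc (K.smul_mem hb.le hv.1) using 1
        module
      · convert K.add_mem hc (K.smul_mem hb.le hv.2) using 1
        module
    have := (hT.closure_subset_iff.mpr hgt)
    rw [closure_Ioi] at this
    exact this hle
  · rintro ⟨h₁, h₂⟩
    refine le_of_forall_pos_le_add fun ε hε => gauge_le_of_mem (by positivity) ?_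
    have hε' : 0 < s + ε := by positivity
    have hεu : ε • u ∈ K := K.smul_mem hε.le huK
    refine ⟨(s + ε)⁻¹ • w, ⟨?_, ?_⟩, smul_inv_smul₀ hε'.ne' w⟩
    · convert K.smul_mem (inv_nonneg.mpr hε'.le) (K.add_mem h₁ hεu) using 1
      rw [show s • u - w + ε • u = (s + ε) • u - w by module, smul_sub, inv_smul_smul₀ hε'.ne']
    · convert K.smul_mem (inv_nonneg.mpr hε'.le) (K.add_mem h₂ hεu) using 1
      rw [show s • u + w + ε • u = (s + ε) • u + w by module, smul_add, inv_smul_smul₀ hε'.ne']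

theorem exists_norm_le_orderUnitNorm [FiniteDimensional ℝ X] (hK : IsClosed (K : Set X))
    (hK_salient : ∀ x ∈ K, -x ∈ K → x = 0) (hu : u ∈ interior (K : Set X)) :
    ∃ c > 0, ∀ w, ‖w‖ ≤ c * orderUnitNorm K u w := by
  have hpos : ∀ w ∈ Metric.sphere (0 : X) 1, 0 < orderUnitNorm K u w := by
    intro w hw
    refine (orderUnitNorm_nonneg w).lt_of_ne' fun h0 => ?_
    obtain ⟨hneg, hw0⟩ := (orderUnitNorm_le_iff hK hu le_rfl).mp h0.le
    rw [zero_smul, zero_sub] at hneg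
    rw [zero_smul, zero_add] at hw0
    simp [hK_salient w hw0 hneg] at hw
  obtain ⟨a, ha, hle⟩ :=
    (isCompact_sphere 0 1).exists_forall_le' (continuous_orderUnitNorm hu).continuousOn hpos
  refine ⟨a⁻¹, inv_pos.mpr ha, fun w => ?_⟩
  rcases eq_or_ne w 0 with rfl | hw
  · simpa using mul_nonneg (inv_nonneg.mpr ha.le) (orderUnitNorm_nonneg 0)
  have hnw : 0 < ‖w‖ := norm_pos_iff.mpr hw
  have h := hle (‖w‖⁻¹ • w) (by simp [norm_smul, hnw.ne'])
  rw [orderUnitNorm_smul (inv_nonneg.mpr hnw.le), inv_mul_eq_div, le_div_iff₀ hnw] at h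
  rw [inv_mul_eq_div, le_div_iff₀ ha, mul_comm]
  exact h

theorem orderUnitNorm_add_le (hu : u ∈ interior (K : Set X)) (v w : X) :
    orderUnitNorm K u (v + w) ≤ orderUnitNorm K u v + orderUnitNorm K u w :=
  gauge_add_le convex_orderInterval (absorbent_nhds_zero (orderInterval_mem_nhds hu)) v w

theorem smul_sub_mem_of_orderUnitNorm_le (hK : IsClosed (K : Set X))
    (hu : u ∈ interior (K : Set X)) {P Q : X} (hP : orderUnitNorm K u (P - u) ≤ 1 / 2) :
    (1 + 2 * orderUnitNorm K u (Q - P)) • P - Q ∈ K := by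
  have hη := orderUnitNorm_nonneg (K := K) (u := u) (Q - P)
  have h₁ := ((orderUnitNorm_le_iff hK hu hη).mp le_rfl).1
  have h₂ := ((orderUnitNorm_le_iff hK hu (by norm_num)).mp hP).2
  convert K.add_mem h₁ (K.smul_mem (mul_nonneg zero_le_two hη) h₂) using 1
  module

theorem orderUnitNorm_sub_le_of_smul_sub_mem (hK : IsClosed (K : Set X))
    (hu : u ∈ interior (K : Set X)) {P Q : X} {l : ℝ} (hl : 1 ≤ l)
    (h₁ : l • P - Q ∈ K) (h₂ : l • Q - P ∈ K) :
    orderUnitNorm K u (Q - u) ≤ (l - 1) + l * orderUnitNorm K u (P - u) := by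
  set n := orderUnitNorm K u (P - u)
  have hn : 0 ≤ n := orderUnitNorm_nonneg _
  obtain ⟨hP₁, hP₂⟩ := (orderUnitNorm_le_iff hK hu hn).mp le_rfl
  refine (orderUnitNorm_le_iff hK hu (by positivity)).mpr ⟨?_, ?_⟩
  · convert K.add_mem h₁ (K.smul_mem (by positivity : 0 ≤ l) hP₁) using 1
    module
  · have hc : 0 ≤ (l - 1) ^ 2 + (l ^ 2 - 1) * n := by nlinarith
    rw [← K.smul_mem_iff (by positivity : 0 < l)]
    convert K.add_mem (K.add_mem h₂ hP₂) (K.smul_mem hc (interior_subset hu)) using 1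
    module

end OrderUnitNorm

section Dynamics

variable {X : Type*} [NormedAddCommGroup X] [NormedSpace ℝ X] {K : PointedCone ℝ X} {f : X → X}

/-- Order-preserving subhomogeneous maps are nonexpansive for Thompson's metric. -/
theorem smul_map_sub_map_mem
    (hf_mono : ∀ x ∈ interior (K : Set X), ∀ y ∈ interior (K : Set X), y - x ∈ K → f y - f x ∈ K)
    (hf_subhom : ∀ x ∈ interior (K : Set X), ∀ t : ℝ, 1 ≤ t → t • f x - f (t • x) ∈ K)
    {P Q : X} (hP : P ∈ interior (K : Set X)) (hQ : Q ∈ interior (K : Set X)) {l : ℝ}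
    (hl : 1 ≤ l) (h : l • P - Q ∈ K) : l • f P - f Q ∈ K := by
  have hlP := PointedCone.smul_mem_interior_s9 hP (by linarith : (0 : ℝ) < l)
  convert K.add_mem (hf_subhom P hP l hl) (hf_mono Q hQ _ hlP h) using 1
  abel

theorem smul_iterate_sub_iterate_mem
    (hf_maps : ∀ x ∈ interior (K : Set X), f x ∈ interior (K : Set X))
    (hf_mono : ∀ x ∈ interior (K : Set X), ∀ y ∈ interior (K : Set X), y - x ∈ K → f y - f x ∈ K)
    (hf_subhom : ∀ x ∈ interior (K : Set X), ∀ t : ℝ, 1 ≤ t → t • f x - f (t • x) ∈ K)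
    {P Q : X} (hP : P ∈ interior (K : Set X)) (hQ : Q ∈ interior (K : Set X)) {l : ℝ}
    (hl : 1 ≤ l) (h : l • P - Q ∈ K) (n : ℕ) : l • f^[n] P - f^[n] Q ∈ K := by
  induction n generalizing P Q with
  | zero => exact h
  | succ n ih =>
    exact ih (hf_maps P hP) (hf_maps Q hQ) (smul_map_sub_map_mem hf_mono hf_subhom hP hQ hl h)

/-- `P` and `Q` bound each other up to the factor `1 + 2 ‖Q - P‖_u`, and `f` preserves such
bounds. -/
theorem orderUnitNorm_iterate_sub_le (hK : IsClosed (K : Set X)) {u : X}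
    (hu : u ∈ interior (K : Set X))
    (hf_maps : ∀ x ∈ interior (K : Set X), f x ∈ interior (K : Set X))
    (hf_mono : ∀ x ∈ interior (K : Set X), ∀ y ∈ interior (K : Set X), y - x ∈ K → f y - f x ∈ K)
    (hf_subhom : ∀ x ∈ interior (K : Set X), ∀ t : ℝ, 1 ≤ t → t • f x - f (t • x) ∈ K)
    {P Q : X} (hP : P ∈ interior (K : Set X)) (hQ : Q ∈ interior (K : Set X))
    (hPu : orderUnitNorm K u (P - u) ≤ 1 / 4) (hQu : orderUnitNorm K u (Q - u) ≤ 1 / 4)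
    (n : ℕ) :
    orderUnitNorm K u (f^[n] Q - u) ≤
      2 * orderUnitNorm K u (Q - P) + 2 * orderUnitNorm K u (f^[n] P - u) := by
  set η := orderUnitNorm K u (Q - P)
  have hη : η ≤ 1 / 2 :=
    calc η = orderUnitNorm K u ((Q - u) + -(P - u)) := by
          rw [← sub_eq_add_neg, sub_sub_sub_cancel_right]
      _ ≤ orderUnitNorm K u (Q - u) + orderUnitNorm K u (-(P - u)) :=
        orderUnitNorm_add_le hu _ _
      _ ≤ 1 / 2 := by rw [orderUnitNorm_neg]; linarith
  have hl : 1 ≤ 1 + 2 * η := by linarith [orderUnitNorm_nonneg (K := K) (u := u) (Q - P)]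
  have h₁ := smul_sub_mem_of_orderUnitNorm_le (Q := Q) hK hu (hPu.trans (by norm_num))
  have h₂ := smul_sub_mem_of_orderUnitNorm_le (Q := P) hK hu (hQu.trans (by norm_num))
  rw [orderUnitNorm_sub_comm] at h₂
  have key := orderUnitNorm_sub_le_of_smul_sub_mem hK hu hl
    (smul_iterate_sub_iterate_mem hf_maps hf_mono hf_subhom hP hQ hl h₁ n)
    (smul_iterate_sub_iterate_mem hf_maps hf_mono hf_subhom hQ hP hl h₂ n)
  have := orderUnitNorm_nonneg (K := K) (u := u) (f^[n] P - u)
  nlinarith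

end Dynamics

section PiecewiseAffine

variable {X : Type*} [NormedAddCommGroup X] [NormedSpace ℝ X]

theorem Convex.smul_add_smul_mem_of_smul_mem {C : Set X} (hC : Convex ℝ C)
    (hcone : ∀ x ∈ C, ∀ t : ℝ, 0 ≤ t → t • x ∈ C) :
    ∀ x ∈ C, ∀ y ∈ C, ∀ a : ℝ, 0 ≤ a → ∀ b : ℝ, 0 ≤ b → a • x + b • y ∈ C := by
  intro x hx y hy a ha b hb
  convert hC (hcone x hx (2 * a) (by positivity)) (hcone y hy (2 * b) (by positivity))
    (by norm_num : (0 : ℝ) ≤ 1 / 2) (by norm_num : (0 : ℝ) ≤ 1 / 2) (by norm_num) using 1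
  module

/-- Near a point `u`, only the pieces containing `u` matter, and on each of them the segment
from `u` stays inside the piece. -/
theorem PiecewiseAffineOn.eventually_apply_lineMap {M : Set X} {f : X → X}
    (hf : PiecewiseAffineOn M f) (hM : Convex ℝ M) {u : X} (hu : u ∈ M) :
    ∀ᶠ v in 𝓝 u, v ∈ M → ∀ s ∈ Set.Icc (0 : ℝ) 1,
      f (AffineMap.lineMap u v s) = AffineMap.lineMap (f u) (f v) s := by
  obtain ⟨m, P, hcov, hP, haff⟩ := hf
  have hnear : ∀ᶠ v in 𝓝 u, ∀ i, u ∉ P i → v ∉ P i := by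
    refine eventually_all.mpr fun i => ?_
    by_cases hui : u ∈ P i
    · exact .of_forall fun _ h => absurd hui h
    · filter_upwards [(hP i).1.isOpen_compl.mem_nhds hui] with v hv _ using hv
  filter_upwards [hnear] with v hv hvM s hs
  obtain ⟨i, hvi⟩ := Set.mem_iUnion.mp (hcov hvM)
  have hui : u ∈ P i := by_contra fun h => hv i h hvi
  obtain ⟨A, b, hA⟩ := haff i
  rw [hA _ ⟨(hP i).2.lineMap_mem hui hvi hs, hM.lineMap_mem hu hvM hs⟩, hA u ⟨hui, hu⟩,
    hA v ⟨hvi, hvM⟩]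
  simp only [AffineMap.lineMap_apply_module, map_add, map_smul]
  module

theorem eventually_iterate_lineMap {M : Set X} {f : X → X} (hf : PiecewiseAffineOn M f)
    (hM : Convex ℝ M) {u x : X} (hu : u ∈ M) (hfu : f u = u) (horb : ∀ k, f^[k] x ∈ M)
    (hconv : Tendsto (fun k => f^[k] x) atTop (𝓝 u)) :
    ∀ᶠ k in atTop, ∀ s ∈ Set.Icc (0 : ℝ) 1, ∀ n,
      f^[n] (AffineMap.lineMap u (f^[k] x) s) = AffineMap.lineMap u (f^[k + n] x) s := by
  obtain ⟨K₁, hK₁⟩ := eventually_atTop.mp (hconv.eventually (hf.eventually_apply_lineMap hM hu))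
  filter_upwards [eventually_ge_atTop K₁] with k hk s hs n
  induction n with
  | zero => rfl
  | succ n ih =>
    rw [Function.iterate_succ_apply', ih, hK₁ (k + n) (by omega) (horb _) s hs, hfu,
      ← Function.iterate_succ_apply' f, ← add_assoc]

end PiecewiseAffine

section Convergence

variable {X : Type*} [NormedAddCommGroup X] [NormedSpace ℝ X]

theorem exists_orbit_comparison {K : PointedCone ℝ X} (hK : IsClosed (K : Set X))
    {u : X} (hu : u ∈ interior (K : Set X)) {f : X → X}
    (hf_maps : ∀ x ∈ interior (K : Set X), f x ∈ interior (K : Set X))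
    (hf_mono : ∀ x ∈ interior (K : Set X), ∀ y ∈ interior (K : Set X), y - x ∈ K → f y - f x ∈ K)
    (hf_subhom : ∀ x ∈ interior (K : Set X), ∀ t : ℝ, 1 ≤ t → t • f x - f (t • x) ∈ K)
    (hf_pa : PiecewiseAffineOn (interior (K : Set X)) f) (hfu : f u = u)
    {x : X} (hx : x ∈ interior (K : Set X)) (hconv : Tendsto (fun k => f^[k] x) atTop (𝓝 u)) :
    ∃ K₁, ∀ p ≥ K₁, ∀ q ≥ K₁, ∀ s ∈ Set.Icc (0 : ℝ) 1, ∀ t,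
      orderUnitNorm K u (f^[q + t] x - u) ≤
        2 * orderUnitNorm K u ((f^[q] x - u) - s • (f^[p] x - u)) +
          2 * orderUnitNorm K u (s • (f^[p + t] x - u)) := by
  have horb : ∀ k, f^[k] x ∈ interior (K : Set X) := fun k => Set.MapsTo.iterate hf_maps k hx
  have hsmall : ∀ᶠ k in atTop, orderUnitNorm K u (f^[k] x - u) ≤ 1 / 4 := by
    have hy : Tendsto (fun k => f^[k] x - u) atTop (𝓝 0) := by
      simpa using hconv.sub_const u
    have h := ((continuous_orderUnitNorm hu).tendsto 0).comp hy
    rw [Function.comp_def, orderUnitNorm, gauge_zero] at h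
    exact h.eventually_le_const (by norm_num)
  obtain ⟨K₁, hK₁⟩ := eventually_atTop.mp
    (hsmall.and (eventually_iterate_lineMap hf_pa K.convex.interior hu hfu horb hconv))
  refine ⟨K₁, fun p hp q hq s hs t => ?_⟩
  have hline : ∀ k, AffineMap.lineMap u (f^[k] x) s - u = s • (f^[k] x - u) := fun k =>
    AffineMap.lineMap_vsub_left u (f^[k] x) s
  have hP := K.convex.interior.lineMap_mem hu (horb p) hs
  have hPu : orderUnitNorm K u (AffineMap.lineMap u (f^[p] x) s - u) ≤ 1 / 4 := by
    rw [hline, orderUnitNorm_smul hs.1]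
    nlinarith [(hK₁ p hp).1, hs.2, orderUnitNorm_nonneg (K := K) (u := u) (f^[p] x - u)]
  have key := orderUnitNorm_iterate_sub_le hK hu hf_maps hf_mono hf_subhom hP (horb q) hPu
    (hK₁ q hq).1 t
  rw [(hK₁ p hp).2 s hs t, hline, ← Function.iterate_add_apply, add_comm t q] at key
  convert key using 4
  rw [← hline, sub_sub_sub_cancel_right]

theorem exists_frequently_dist_lt {E : Type*} [PseudoMetricSpace E] [ProperSpace E] {z : ℕ → E}
    (hz : Bornology.IsBounded (Set.range z)) {δ : ℝ} (hδ : 0 < δ) :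
    ∃ J, ∃ᶠ n in atTop, dist (z n) (z J) < δ := by
  obtain ⟨a, -, φ, hφ, hlim⟩ := tendsto_subseq_of_bounded hz (Set.mem_range_self (f := z))
  obtain ⟨J, hJ⟩ := eventually_atTop.mp (Metric.tendsto_nhds.mp hlim (δ / 2) (half_pos hδ))
  refine ⟨φ J, hφ.tendsto_atTop.frequently (Eventually.frequently ?_)⟩
  filter_upwards [eventually_ge_atTop J] with n hn
  calc dist (z (φ n)) (z (φ J)) ≤ dist (z (φ n)) a + dist (z (φ J)) a := dist_triangle_right _ _ _
    _ < δ / 2 + δ / 2 := add_lt_add (hJ n hn) (hJ J le_rfl)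
    _ = δ := add_halves δ

theorem exists_eventually_le_mul_of_comparison [ProperSpace X] {N : X → ℝ} {c : ℝ}
    (hN_nonneg : ∀ w, 0 ≤ N w) (hN_smul : ∀ t : ℝ, 0 ≤ t → ∀ w, N (t • w) = t * N w)
    (hN_cont : Continuous N) (hle_N : ∀ w, ‖w‖ ≤ c * N w)
    {y : ℕ → X} (hy0 : Tendsto y atTop (𝓝 0)) (hy : ∀ k, y k ≠ 0) {K₁ : ℕ}
    (hcomp : ∀ p ≥ K₁, ∀ q ≥ K₁, ∀ s ∈ Set.Icc (0 : ℝ) 1, ∀ t,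
      N (y (q + t)) ≤ 2 * N (y q - s • y p) + 2 * N (s • y (p + t)))
    {ρ : ℝ} (hρ : 0 < ρ) : ∃ m K, ∀ k ≥ K, N (y (k + m)) ≤ ρ * N (y k) := by
  by_contra! h
  choose k hk_ge hk_lt using fun j => h j (max j K₁)
  have hN0 : N 0 = 0 := by simpa using hN_smul 0 le_rfl 0
  have hN_pos : ∀ w, w ≠ 0 → 0 < N w := fun w hw => (hN_nonneg w).lt_of_ne' fun h0 =>
    hw (norm_le_zero_iff.mp (by simpa [h0] using hle_N w))
  set z : ℕ → X := fun j => (N (y (k j)))⁻¹ • y (k j)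
  have hz : Bornology.IsBounded (Set.range z) := by
    refine (Metric.isBounded_closedBall (x := 0) (r := c)).subset (Set.range_subset_iff.mpr ?_)
    intro j
    rw [mem_closedBall_zero_iff]
    refine (hle_N _).trans_eq ?_
    rw [hN_smul _ (inv_nonneg.mpr (hN_nonneg _)), inv_mul_cancel₀ (hN_pos _ (hy _)).ne', mul_one]
  set δ := min ρ 1 / 8
  have hδ : 0 < δ := by positivity
  have hδρ : δ ≤ ρ / 8 := by simp only [δ]; linarith [min_le_left ρ 1]
  have hδ1 : δ ≤ 1 / 8 := by simp only [δ]; linarith [min_le_right ρ 1]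
  obtain ⟨ε, hε, hNε⟩ := Metric.continuous_iff.mp hN_cont 0 δ hδ
  obtain ⟨J, hJ⟩ := exists_frequently_dist_lt hz hε
  set p := k J
  have hNp := hN_pos _ (hy p)
  have hNy : Tendsto (fun k => N (y k)) atTop (𝓝 0) := hN0 ▸ (hN_cont.tendsto 0).comp hy0
  obtain ⟨M, hM⟩ := eventually_atTop.mp (hNy.eventually_le_const (mul_pos hδ hNp))
  obtain ⟨n, hn, hnM⟩ := (hJ.and_eventually (eventually_ge_atTop M)).exists
  set q := k n
  have hNq := hN_pos _ (hy q)
  have hNqp : N (y q) ≤ δ * N (y p) := hM q (by have := hk_ge n; omega)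
  set s := N (y q) / N (y p)
  have hs : s ∈ Set.Icc (0 : ℝ) 1 := by
    refine ⟨by positivity, (div_le_one hNp).mpr (hNqp.trans ?_)⟩
    nlinarith
  have hη : N (y q - s • y p) ≤ δ * N (y q) := by
    have hyq : y q - s • y p = N (y q) • (z n - z J) := by
      simp only [z, smul_sub, smul_smul, s]
      rw [mul_inv_cancel₀ hNq.ne', one_smul, div_eq_mul_inv]
    have hclose := hNε (z n - z J) (by rwa [dist_zero_right, ← dist_eq_norm])
    rw [hN0, Real.dist_0_eq_abs, abs_of_nonneg (hN_nonneg _)] at hclose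
    rw [hyq, hN_smul _ (hN_nonneg _)]
    nlinarith
  have hpn : N (s • y (p + n)) ≤ δ * N (y q) := by
    rw [hN_smul _ hs.1]
    have := hM (p + n) (by omega)
    calc s * N (y (p + n)) ≤ s * (δ * N (y p)) := mul_le_mul_of_nonneg_left this hs.1
      _ = δ * N (y q) := by simp only [s]; field_simp
  have hgrow : ρ * N (y q) < N (y (q + n)) := hk_lt n
  have hcmp := hcomp p ((le_max_right _ _).trans (hk_ge J)) q
    ((le_max_right _ _).trans (hk_ge n)) s hs n
  nlinarith

end Convergence

theorem piecewise_affine_cone_linear_convergence_general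
    {X : Type*} [NormedAddCommGroup X] [NormedSpace ℝ X] [FiniteDimensional ℝ X]
    (C : Set X) (hC_closed : IsClosed C) (hC_convex : Convex ℝ C)
    (hC_cone : ∀ x ∈ C, ∀ t : ℝ, 0 ≤ t → t • x ∈ C)
    (hC_pointed : ∀ x, x ∈ C → -x ∈ C → x = 0)
    (f : X → X)
    (hf_maps : ∀ x ∈ interior C, f x ∈ interior C)
    (hf_mono : ∀ x ∈ interior C, ∀ y ∈ interior C, y - x ∈ C → f y - f x ∈ C)
    (hf_subhom : ∀ x ∈ interior C, ∀ t : ℝ, 1 ≤ t → t • f x - f (t • x) ∈ C)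
    (hf_pa : PiecewiseAffineOn (interior C) f)
    (x : X) (hx : x ∈ interior C) (u : X) (hu : u ∈ interior C) (hfu : f u = u)
    (hconv : Tendsto (fun k => f^[k] x) atTop (𝓝 u)) :
    ∃ (m : ℕ) (γ : ℝ), 0 < γ ∧ γ < 1 ∧
      ∃ N : ℕ, ∀ k ≥ N, ‖f^[k + m] x - u‖ ≤ γ * ‖f^[k] x - u‖ := by
  let K : PointedCone ℝ X := .ofConeComb C ⟨u, interior_subset hu⟩
    (hC_convex.smul_add_smul_mem_of_smul_mem hC_cone)
  by_cases hhit : ∃ k, f^[k] x = u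
  · obtain ⟨k₀, hk₀⟩ := hhit
    refine ⟨0, 1 / 2, by norm_num, by norm_num, k₀, fun k hk => ?_⟩
    obtain ⟨j, rfl⟩ := Nat.exists_eq_add_of_le hk
    simp [add_comm k₀ j, Function.iterate_add_apply, hk₀, Function.iterate_fixed hfu]
  push Not at hhit
  obtain ⟨c, hc, hcN⟩ := exists_norm_le_orderUnitNorm (K := K) hC_closed hC_pointed hu
  obtain ⟨R, hR, hNR⟩ := exists_orderUnitNorm_le_norm (K := K) hu
  obtain ⟨K₁, hK₁⟩ := exists_orbit_comparison (K := K) hC_closed hu hf_maps hf_mono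
    hf_subhom hf_pa hfu hx hconv
  obtain ⟨m, K₂, hm⟩ := exists_eventually_le_mul_of_comparison orderUnitNorm_nonneg
    (fun t ht => orderUnitNorm_smul ht) (continuous_orderUnitNorm hu) hcN
    (by simpa using hconv.sub_const u) (fun k => sub_ne_zero.mpr (hhit k)) hK₁
    (ρ := (2 * c * R)⁻¹) (by positivity)
  refine ⟨m, 1 / 2, by norm_num, by norm_num, K₂, fun k hk => ?_⟩
  calc ‖f^[k + m] x - u‖ ≤ c * orderUnitNorm K u (f^[k + m] x - u) := hcN _
    _ ≤ c * ((2 * c * R)⁻¹ * (R * ‖f^[k] x - u‖)) := by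
      gcongr
      exact (hm k hk).trans (by gcongr; exact hNR _)
    _ = 1 / 2 * ‖f^[k] x - u‖ := by field_simp

/-- an order-preserving, subhomogeneous, piecewise affine self-map of the
interior of a closed cone in a finite-dimensional space: if the iterates of some point
converge to an interior fixed point, then they do so at a linear rate. -/
theorem piecewise_affine_cone_linear_convergence
    {X : Type*} [NormedAddCommGroup X] [NormedSpace ℝ X] [FiniteDimensional ℝ X]
    (C : Set X) (hC_closed : IsClosed C) (hC_convex : Convex ℝ C)
    (hC_cone : ∀ x ∈ C, ∀ t : ℝ, 0 ≤ t → t • x ∈ C)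
    (hC_pointed : ∀ x, x ∈ C → -x ∈ C → x = 0)
    (hC_int : (interior C).Nonempty)
    (f : X → X)
    (hf_maps : ∀ x ∈ interior C, f x ∈ interior C)
    (hf_mono : ∀ x ∈ interior C, ∀ y ∈ interior C, y - x ∈ C → f y - f x ∈ C)
    (hf_subhom : ∀ x ∈ interior C, ∀ t : ℝ, 1 ≤ t → t • f x - f (t • x) ∈ C)
    (hf_pa : PiecewiseAffineOn (interior C) f)
    (x : X) (hx : x ∈ interior C) (u : X) (hu : u ∈ interior C) (hfu : f u = u)
    (hconv : Tendsto (fun k => f^[k] x) atTop (𝓝 u)) :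
    ∃ (m : ℕ) (γ : ℝ), 0 < γ ∧ γ < 1 ∧
      ∃ N : ℕ, ∀ k ≥ N, ‖f^[k + m] x - u‖ ≤ γ * ‖f^[k] x - u‖ :=
  piecewise_affine_cone_linear_convergence_general C hC_closed hC_convex hC_cone hC_pointed f
    hf_maps hf_mono hf_subhom hf_pa x hx u hu hfu hconv
end

section
/- Let X be a finite-dimensional real Banach space and let f : X → X be piecewise affine and nonexpansive with respect to the norm on X. Suppose there are v, w ∈ X with f(v + tw) = v + (t + 1)w for all t ≥ 0. Define g(x) := f(x) − w for x ∈ X. Then for every x ∈ X there exists m ∈ ℕ such that f^{k+m}(x) = g^k(f^m(x)) + kw for all k ∈ ℕ. -/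
open Filter Topology

/-! Nonexpansiveness keeps the orbit of `x` within `R = ‖x - v‖` of the points `v + n • w` of
the invariant ray. A closed convex piece meeting this tube arbitrarily far out contains the ray
`p + ℝ≥0 • w` through each of its points; since `f` is affine on that ray and stays within
`‖p - v‖` of the invariant ray, the linear part of the piece fixes `w`. So beyond some depth
every piece meeting the tube has linear part fixing `w`, and there `f` commutes with
translation by nonnegative multiples of `w`; the iterates of `f` and of `g = f - w` then
differ by `k • w`. -/

open Set

section

variable {X : Type*} [NormedAddCommGroup X] [NormedSpace ℝ X] {f : X → X}

theorem eq_zero_of_forall_norm_add_smul_le {a d : X} {K : ℝ}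
    (h : ∀ s : ℝ, 0 ≤ s → ‖a + s • d‖ ≤ K) : d = 0 := by
  by_contra hd
  have hd_pos : 0 < ‖d‖ := norm_pos_iff.mpr hd
  have hK : 0 ≤ K := (norm_nonneg _).trans (h 0 le_rfl)
  set s := (K + ‖a‖ + 1) / ‖d‖
  have hs : s * ‖d‖ = K + ‖a‖ + 1 := div_mul_cancel₀ _ hd_pos.ne'
  have : s * ‖d‖ ≤ K + ‖a‖ :=
    calc s * ‖d‖ = ‖(a + s • d) - a‖ := by
          rw [add_sub_cancel_left, norm_smul, Real.norm_of_nonneg (by positivity)]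
      _ ≤ K + ‖a‖ := (norm_sub_le _ _).trans (by gcongr; exact h s (by positivity))
  linarith

theorem Convex.add_smul_mem_of_frequently_near_ray {C : Set X} (hC : Convex ℝ C)
    (hCc : IsClosed C) {p v w : X} {R : ℝ} (hp : p ∈ C)
    (hfreq : ∃ᶠ t : ℝ in atTop, ∃ q ∈ C, ‖q - (v + t • w)‖ ≤ R) {s : ℝ} (hs : 0 ≤ s) :
    p + s • w ∈ C := by
  rw [← hCc.closure_eq, Metric.mem_closure_iff]
  intro ε hε
  set K := R + ‖v - p‖
  obtain ⟨t, ht, q, hq, hqR⟩ := frequently_atTop.mp hfreq (max s (s * K / ε) + 1)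
  have ht_pos : 0 < t := by linarith [le_max_left s (s * K / ε)]
  have hst : s / t ≤ 1 := (div_le_one ht_pos).mpr (by linarith [le_max_left s (s * K / ε)])
  have hsK : s * K < ε * t := by
    have := (div_lt_iff₀' hε).mp (by linarith [le_max_right s (s * K / ε)] : s * K / ε < t)
    linarith
  -- `p + (s / t) • (q - p)` lies on the chord from `p` to `q` and tends to `p + s • w` as `t → ∞`
  refine ⟨p + (s / t) • (q - p), hC.add_smul_sub_mem hp hq ⟨by positivity, hst⟩, ?_⟩
  calc dist (p + s • w) (p + (s / t) • (q - p))
      = (s / t) * ‖(q - (v + t • w)) + (v - p)‖ := by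
        have hts : s / t * t = s := div_mul_cancel₀ s ht_pos.ne'
        have hdiff : p + (s / t) • (q - p) - (p + s • w)
            = (s / t) • (q - (v + t • w) + (v - p)) := by
          simp only [smul_add, smul_sub, smul_smul, hts]; abel
        rw [dist_comm, dist_eq_norm, hdiff, norm_smul, Real.norm_of_nonneg (by positivity)]
    _ ≤ (s / t) * K := by gcongr; exact (norm_add_le _ _).trans (by linarith)
    _ < ε := by rw [div_mul_eq_mul_div, div_lt_iff₀ ht_pos]; exact hsK

theorem norm_iterate_sub_le_of_invariant_ray (hf : ∀ x y, ‖f x - f y‖ ≤ ‖x - y‖) {v w : X}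
    (hline : ∀ t : ℝ, 0 ≤ t → f (v + t • w) = v + (t + 1) • w) (x : X) (n : ℕ) :
    ‖f^[n] x - (v + (n : ℝ) • w)‖ ≤ ‖x - v‖ := by
  induction n with
  | zero => simp
  | succ n ih =>
    rw [Function.iterate_succ_apply', Nat.cast_succ, ← hline n n.cast_nonneg]
    exact (hf _ _).trans ih

theorem LinearMap.apply_eq_self_of_ray_subset (hf : ∀ x y, ‖f x - f y‖ ≤ ‖x - y‖) {v w : X}
    (hline : ∀ t : ℝ, 0 ≤ t → f (v + t • w) = v + (t + 1) • w) {C : Set X}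
    {A : X →ₗ[ℝ] X} {b : X} (haff : ∀ x ∈ C, f x = A x + b) {p : X}
    (hray : ∀ s : ℝ, 0 ≤ s → p + s • w ∈ C) : A w = w := by
  have hp : p ∈ C := by simpa using hray 0 le_rfl
  rw [← sub_eq_zero]
  refine eq_zero_of_forall_norm_add_smul_le (a := f p - (v + w)) (K := ‖p - v‖) fun s hs => ?_
  calc ‖f p - (v + w) + s • (A w - w)‖ = ‖f (p + s • w) - f (v + s • w)‖ := by
        rw [haff _ (hray s hs), haff p hp, hline s hs, map_add, map_smul]
        congr 1
        module
    _ ≤ ‖p + s • w - (v + s • w)‖ := hf _ _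
    _ = ‖p - v‖ := by rw [add_sub_add_right_eq_sub]

variable {ι : Type*} [Finite ι] {P : ι → Set X} {A : ι → X →ₗ[ℝ] X} {b : ι → X}

theorem map_add_smul_eq_of_forall_mem_piece (hfc : Continuous f)
    (haff : ∀ i, ∀ x ∈ P i, f x = A i x + b i) {z w : X} {s : ℝ} (hs : 0 ≤ s)
    (hpiece : ∀ r ∈ Icc 0 s, ∃ i, z + r • w ∈ P i ∧ A i w = w) :
    f (z + s • w) = f z + s • w := by
  -- `r ↦ f (z + r • w) - r • w` is continuous on `[0, s]` with values in the finite set of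
  -- the `A i z + b i`, hence constant
  have hconst := isPreconnected_Icc.constant_of_mapsTo
    (finite_range fun i => A i z + b i).isDiscrete (f := fun r : ℝ => f (z + r • w) - r • w)
    (by fun_prop) ?_ (left_mem_Icc.mpr hs) (right_mem_Icc.mpr hs)
  · rw [zero_smul, add_zero, sub_zero] at hconst
    rw [hconst, sub_add_cancel]
  · intro r hr
    obtain ⟨i, hi, hAw⟩ := hpiece r hr
    refine ⟨i, ?_⟩
    dsimp only
    rw [haff i _ hi, map_add, map_smul, hAw]
    abel

theorem eventually_apply_eq_self_of_mem_tube (hconv : ∀ i, Convex ℝ (P i))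
    (hclosed : ∀ i, IsClosed (P i)) (haff : ∀ i, ∀ x ∈ P i, f x = A i x + b i)
    (hf : ∀ x y, ‖f x - f y‖ ≤ ‖x - y‖) {v w : X}
    (hline : ∀ t : ℝ, 0 ≤ t → f (v + t • w) = v + (t + 1) • w) (R : ℝ) :
    ∀ᶠ t : ℝ in atTop, ∀ z, ‖z - (v + t • w)‖ ≤ R → ∀ i, z ∈ P i → A i w = w := by
  have hpiece : ∀ i, ∀ᶠ t : ℝ in atTop, ∀ z, ‖z - (v + t • w)‖ ≤ R → z ∈ P i → A i w = w := by
    intro i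
    by_cases hfreq : ∃ᶠ t : ℝ in atTop, ∃ q ∈ P i, ‖q - (v + t • w)‖ ≤ R
    · obtain ⟨-, q, hq, -⟩ := hfreq.exists
      have hAw := LinearMap.apply_eq_self_of_ray_subset hf hline (haff i) fun s hs =>
        (hconv i).add_smul_mem_of_frequently_near_ray (hclosed i) hq hfreq hs
      exact Eventually.of_forall fun _ _ _ _ => hAw
    · filter_upwards [not_frequently.mp hfreq] with t ht z hz hzi
      exact absurd ⟨z, hzi, hz⟩ ht
  filter_upwards [eventually_all.mpr hpiece] with t ht z hz i hi using ht i z hz hi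

theorem eventually_map_add_smul_eq_of_mem_tube (hconv : ∀ i, Convex ℝ (P i))
    (hclosed : ∀ i, IsClosed (P i)) (haff : ∀ i, ∀ x ∈ P i, f x = A i x + b i)
    (hf : ∀ x y, ‖f x - f y‖ ≤ ‖x - y‖) {v w : X}
    (hline : ∀ t : ℝ, 0 ≤ t → f (v + t • w) = v + (t + 1) • w)
    (hcover : ∀ x, ∃ i, x ∈ P i) (R : ℝ) :
    ∀ᶠ t : ℝ in atTop, ∀ z, ‖z - (v + t • w)‖ ≤ R → ∀ s : ℝ, 0 ≤ s →
      f (z + s • w) = f z + s • w := by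
  have hfc : Continuous f := (LipschitzWith.of_dist_le_mul (K := 1) fun x y => by
    simpa [dist_eq_norm] using hf x y).continuous
  obtain ⟨T, hT⟩ := eventually_atTop.mp
    (eventually_apply_eq_self_of_mem_tube hconv hclosed haff hf hline R)
  filter_upwards [eventually_ge_atTop T] with t ht z hz s hs
  refine map_add_smul_eq_of_forall_mem_piece hfc haff hs fun r hr => ?_
  obtain ⟨i, hi⟩ := hcover (z + r • w)
  refine ⟨i, hi, hT (t + r) (by linarith [hr.1]) _ ?_ i hi⟩
  calc ‖z + r • w - (v + (t + r) • w)‖ = ‖z - (v + t • w)‖ := by congr 1; module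
    _ ≤ R := hz

end

theorem Function.iterate_eq_iterate_sub_add_smul {X : Type*} [AddCommGroup X] [Module ℝ X]
    {f : X → X} {w y : X} {S : Set X} (hS : ∀ k : ℕ, f^[k] y - (k : ℝ) • w ∈ S)
    (hcomm : ∀ z ∈ S, ∀ k : ℕ, f (z + (k : ℝ) • w) = f z + (k : ℝ) • w) (k : ℕ) :
    f^[k] y = (fun z => f z - w)^[k] y + (k : ℝ) • w := by
  induction k with
  | zero => simp
  | succ k ih =>
    have hstep := hcomm _ (hS k) k
    rw [sub_add_cancel] at hstep
    rw [Function.iterate_succ_apply', hstep, ih, add_sub_cancel_right,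
      Function.iterate_succ_apply', Nat.cast_succ]
    module

theorem invariant_halfline_reduction_general
    {X : Type*} [NormedAddCommGroup X] [NormedSpace ℝ X]
    (f : X → X)
    (hf_pa : PiecewiseAffineOn (Set.univ : Set X) f)
    (hf_nonexp : ∀ x y : X, ‖f x - f y‖ ≤ ‖x - y‖)
    (v w : X) (hline : ∀ t : ℝ, 0 ≤ t → f (v + t • w) = v + (t + 1) • w) :
    ∀ x : X, ∃ m : ℕ, ∀ k : ℕ,
      f^[k + m] x = (fun z => f z - w)^[k] (f^[m] x) + (k : ℝ) • w := by
  obtain ⟨N, P, hcover, hpieces, haff⟩ := hf_pa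
  choose A b haff using haff
  intro x
  obtain ⟨m, hm⟩ := (tendsto_natCast_atTop_atTop.eventually
    (eventually_map_add_smul_eq_of_mem_tube (fun i => (hpieces i).2) (fun i => (hpieces i).1)
      (fun i y hy => haff i y ⟨hy, mem_univ y⟩) hf_nonexp hline
      (fun y => mem_iUnion.mp (hcover (mem_univ y))) ‖x - v‖)).exists
  refine ⟨m, fun k => ?_⟩
  rw [Function.iterate_add_apply]
  refine Function.iterate_eq_iterate_sub_add_smul (S := {z | ‖z - (v + (m : ℝ) • w)‖ ≤ ‖x - v‖})
    (fun j => ?_) (fun z hz j => hm z hz j j.cast_nonneg) k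
  calc ‖f^[j] (f^[m] x) - (j : ℝ) • w - (v + (m : ℝ) • w)‖
      = ‖f^[j + m] x - (v + ((j + m : ℕ) : ℝ) • w)‖ := by
        rw [Function.iterate_add_apply, Nat.cast_add]
        congr 1
        module
    _ ≤ ‖x - v‖ := norm_iterate_sub_le_of_invariant_ray hf_nonexp hline x _

/-- if a piecewise affine norm-nonexpansive map on a finite-dimensional Banach
space has an invariant half-line `f(v + tw) = v + (t+1)w` for `t ≥ 0`, and `g := f - w`, then
for every `x` there is `m` with `f^{k+m}(x) = g^k(f^m(x)) + k w` for all `k`. -/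
theorem invariant_halfline_reduction
    {X : Type*} [NormedAddCommGroup X] [NormedSpace ℝ X] [FiniteDimensional ℝ X]
    (f : X → X)
    (hf_pa : PiecewiseAffineOn (Set.univ : Set X) f)
    (hf_nonexp : ∀ x y : X, ‖f x - f y‖ ≤ ‖x - y‖)
    (v w : X) (hline : ∀ t : ℝ, 0 ≤ t → f (v + t • w) = v + (t + 1) • w) :
    ∀ x : X, ∃ m : ℕ, ∀ k : ℕ,
      f^[k + m] x = (fun z => f z - w)^[k] (f^[m] x) + (k : ℝ) • w :=
  invariant_halfline_reduction_general f hf_pa hf_nonexp v w hline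
end

section
/- Let f : ℝ^n_{>0} → ℝ^n_{>0} be order-preserving, homogeneous, multiplicatively convex, and analytic. Then f is type K order-preserving if and only if for every i ∈ {1,…,n} the directed graph G(f) has an arc from i to itself, i.e., lim_{t→∞} f(exp(t e_i))_i = ∞. -/
/-!
If `f` is type K, then `f_i` strictly increases from `1` to `exp e_i`; since `log f_i` is convex
along the line `t e_i`, it then grows at least linearly in `t`, which is the loop at `i`.

Conversely, join `x ≤ y` by the curve `exp (log x + t (log y - log x))`. Along it `f_i` is monotone
and analytic, so if `f x i = f y i` it is constant on `[0, 1]` and hence on all of `ℝ`. But when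
`x i < y i`, a fixed multiple of the curve at time `t` dominates `exp (s e_i)` with `s → ∞` as
`t → ∞`, so by homogeneity and the loop at `i`, `f_i` is unbounded along it. Strict monotonicity
in every coordinate with `x i < y i` yields a uniform `ε` because there are finitely many
coordinates.
-/

open Filter Topology

/-- The directed graph `G(f)` has an arc from `i` to `j` when
`f(exp(t e_j))_i → ∞` as `t → ∞`. -/
def GraphArc {n : ℕ} (f : (Fin n → ℝ) → (Fin n → ℝ)) (i j : Fin n) : Prop :=
  Tendsto (fun t : ℝ => f (fun k => Real.exp (if k = j then t else 0)) i) atTop atTop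

open Set Real

theorem ConvexOn.tendsto_atTop_of_lt {ψ : ℝ → ℝ} (hψ : ConvexOn ℝ univ ψ) {a b : ℝ}
    (hab : a < b) (h : ψ a < ψ b) : Tendsto ψ atTop atTop := by
  set m := (ψ b - ψ a) / (b - a)
  have hm : 0 < m := div_pos (sub_pos.2 h) (sub_pos.2 hab)
  have hline : Tendsto (fun t => ψ b + m * (t - b)) atTop atTop :=
    tendsto_atTop_add_const_left _ _
      ((tendsto_const_mul_atTop_of_pos hm).2 (tendsto_atTop_add_const_right _ _ tendsto_id))
  refine tendsto_atTop_mono' atTop ?_ hline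
  filter_upwards [eventually_gt_atTop b] with t hbt
  have hslope := hψ.slope_mono_adjacent (mem_univ a) (mem_univ t) hab hbt
  rw [le_div_iff₀ (sub_pos.2 hbt)] at hslope
  linarith

theorem AnalyticOnNhd.strictMono_of_monotone {φ : ℝ → ℝ} (hφ : AnalyticOnNhd ℝ φ univ)
    (hmono : Monotone φ) (hconst : ∀ c, ∃ t, φ t ≠ c) : StrictMono φ := by
  intro a b hab
  refine (hmono hab.le).lt_of_ne fun heq => ?_
  obtain ⟨t, ht⟩ := hconst (φ a)
  have hloc : φ =ᶠ[𝓝 ((a + b) / 2)] fun _ => φ a := by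
    filter_upwards [Ioo_mem_nhds (by linarith : a < (a + b) / 2)
      (by linarith : (a + b) / 2 < b)] with s hs
    exact le_antisymm (heq ▸ hmono hs.2.le) (hmono hs.1.le)
  exact ht (congrFun (hφ.eq_of_eventuallyEq analyticOnNhd_const hloc) t)

theorem exists_pos_mul_le_iff {ι : Type*} [Finite ι] {a b : ι → ℝ} (hb : ∀ i, 0 ≤ b i) :
    (∃ ε > 0, ∀ i, ε * a i ≤ b i) ↔ ∀ i, 0 < a i → 0 < b i := by
  constructor
  · rintro ⟨ε, hε, h⟩ i hai
    exact (mul_pos hε hai).trans_le (h i)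
  · intro h
    have hsmall : ∀ i, ∀ᶠ ε in 𝓝[>] (0 : ℝ), ε * a i ≤ b i := fun i => by
      by_cases hai : 0 < a i
      · have hlim : Tendsto (fun ε : ℝ => ε * a i) (𝓝[>] 0) (𝓝 0) := by
          simpa using ((continuous_mul_const (a i)).tendsto 0).mono_left nhdsWithin_le_nhds
        exact (hlim.eventually (gt_mem_nhds (h i hai))).mono fun _ => le_of_lt
      · filter_upwards [self_mem_nhdsWithin] with ε (hε : 0 < ε)
        linarith [hb i, mul_nonpos_of_nonneg_of_nonpos hε.le (not_lt.1 hai)]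
    obtain ⟨ε, hε, hεb⟩ :=
      (eventually_mem_nhdsWithin.and (eventually_all.2 hsmall)).exists
    exact ⟨ε, hε, hεb⟩

section PositiveCone

variable {n : ℕ} {f : (Fin n → ℝ) → (Fin n → ℝ)}

theorem graphArc_self_of_apply_lt {i : Fin n}
    (hf_maps : ∀ x : Fin n → ℝ, (∀ i, 0 < x i) → ∀ i, 0 < f x i)
    (hconv : ConvexOn ℝ univ fun v : Fin n → ℝ => log (f (fun j => exp (v j)) i))
    (h : f 1 i < f (fun k => exp ((Pi.single i 1 : Fin n → ℝ) k)) i) : GraphArc f i i := by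
  set ψ : ℝ → ℝ := fun t => log (f (fun k => exp ((Pi.single i t : Fin n → ℝ) k)) i)
  have hψ : ConvexOn ℝ univ ψ := hconv.comp_linearMap (LinearMap.single ℝ (fun _ => ℝ) i)
  have h01 : ψ 0 < ψ 1 := by
    refine log_lt_log (hf_maps _ (fun _ => exp_pos _) i) ?_
    simpa [Pi.one_def] using h
  have hlim := tendsto_exp_atTop.comp (hψ.tendsto_atTop_of_lt one_pos h01)
  refine hlim.congr fun t => ?_
  simp only [Function.comp_apply, ψ, exp_log (hf_maps _ (fun _ => exp_pos _) i), Pi.single_apply]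

noncomputable def expLine (u d : Fin n → ℝ) (t : ℝ) : Fin n → ℝ := fun j => exp (u j + t * d j)

theorem expLine_pos (u d : Fin n → ℝ) (t : ℝ) (j : Fin n) : 0 < expLine u d t j := exp_pos _

theorem monotone_expLine (u : Fin n → ℝ) {d : Fin n → ℝ} (hd : ∀ j, 0 ≤ d j) :
    Monotone (expLine u d) := fun _ _ hst j =>
  exp_le_exp.2 (by have := hd j; gcongr)

theorem AnalyticOn.analyticOnNhd_apply_expLine
    (hf : AnalyticOn ℝ f {x : Fin n → ℝ | ∀ i, 0 < x i}) (u d : Fin n → ℝ) (i : Fin n) :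
    AnalyticOnNhd ℝ (fun t => f (expLine u d t) i) univ := by
  have hopen : IsOpen {x : Fin n → ℝ | ∀ i, 0 < x i} := by
    simpa [Set.pi] using isOpen_set_pi finite_univ fun (_ : Fin n) _ => isOpen_Ioi (a := (0 : ℝ))
  intro t _
  have hline : AnalyticAt ℝ (expLine u d) t :=
    .pi fun j => (analyticAt_const.add (analyticAt_id.mul analyticAt_const)).rexp
  exact analyticAt_pi_iff.1
    ((hopen.analyticOn_iff_analyticOnNhd.1 hf _ (expLine_pos u d t)).comp hline) i

theorem GraphArc.tendsto_expLine {i : Fin n}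
    (hf_mono : ∀ x y : Fin n → ℝ, (∀ i, 0 < x i) → (∀ i, 0 < y i) → x ≤ y → f x ≤ f y)
    (hf_hom : ∀ x : Fin n → ℝ, (∀ i, 0 < x i) → ∀ t : ℝ, 0 < t → f (t • x) = t • f x)
    (hloop : GraphArc f i i) (u : Fin n → ℝ) {d : Fin n → ℝ} (hd : ∀ j, 0 ≤ d j)
    (hdi : 0 < d i) : Tendsto (fun t => f (expLine u d t) i) atTop atTop := by
  set c := ∑ j, |u j|
  have hc : ∀ j, 0 ≤ c + u j := fun j =>
    neg_le_iff_add_nonneg'.1 (abs_le.1 (Finset.single_le_sum (f := fun j => |u j|)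
      (fun _ _ => abs_nonneg _) (Finset.mem_univ j))).1
  have hs : Tendsto (fun t => c + u i + t * d i) atTop atTop :=
    tendsto_atTop_add_const_left _ _ (tendsto_id.atTop_mul_const hdi)
  have hbound : ∀ t ≥ 0, f (fun k => exp (if k = i then c + u i + t * d i else 0)) i ≤
      exp c * f (expLine u d t) i := by
    intro t ht
    have hle : (fun k => exp (if k = i then c + u i + t * d i else 0)) ≤
        exp c • expLine u d t := by
      intro k
      simp only [Pi.smul_apply, smul_eq_mul, expLine, ← exp_add]
      refine exp_le_exp.2 ?_
      split_ifs with hk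
      · subst hk; linarith
      · linarith [hc k, mul_nonneg ht (hd k)]
    calc _ ≤ f (exp c • expLine u d t) i :=
          hf_mono _ _ (fun _ => exp_pos _) (fun j => mul_pos (exp_pos c) (expLine_pos u d t j))
            hle i
      _ = exp c * f (expLine u d t) i := by
          rw [hf_hom _ (expLine_pos u d t) _ (exp_pos c)]; rfl
  rw [← tendsto_const_mul_atTop_of_pos (exp_pos c)]
  refine tendsto_atTop_mono' atTop ?_ (hloop.comp hs)
  filter_upwards [eventually_ge_atTop 0] with t ht using hbound t ht

theorem apply_lt_apply_of_graphArc_self {i : Fin n}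
    (hf_mono : ∀ x y : Fin n → ℝ, (∀ i, 0 < x i) → (∀ i, 0 < y i) → x ≤ y → f x ≤ f y)
    (hf_hom : ∀ x : Fin n → ℝ, (∀ i, 0 < x i) → ∀ t : ℝ, 0 < t → f (t • x) = t • f x)
    (hf_anal : AnalyticOn ℝ f {x : Fin n → ℝ | ∀ i, 0 < x i}) (hloop : GraphArc f i i)
    {x y : Fin n → ℝ} (hx : ∀ i, 0 < x i) (hy : ∀ i, 0 < y i) (hxy : x ≤ y) (hi : x i < y i) :
    f x i < f y i := by
  set u : Fin n → ℝ := fun j => log (x j)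
  set d : Fin n → ℝ := fun j => log (y j) - log (x j)
  have hd : ∀ j, 0 ≤ d j := fun j => sub_nonneg.2 (log_le_log (hx j) (hxy j))
  have hdi : 0 < d i := sub_pos.2 (log_lt_log (hx i) hi)
  have hφ : StrictMono fun t => f (expLine u d t) i :=
    (hf_anal.analyticOnNhd_apply_expLine u d i).strictMono_of_monotone
      (fun _ _ hst => hf_mono _ _ (expLine_pos u d _) (expLine_pos u d _)
        (monotone_expLine u hd hst) i)
      fun c => ((hloop.tendsto_expLine hf_mono hf_hom u hd hdi).eventually_gt_atTop c).exists.imp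
        fun _ => ne_of_gt
  have h0 : expLine u d 0 = x := funext fun j => by simp [expLine, u, exp_log (hx j)]
  have h1 : expLine u d 1 = y := funext fun j => by simp [expLine, u, d, exp_log (hy j)]
  simpa only [h0, h1] using hφ zero_lt_one

end PositiveCone

/-- an order-preserving, homogeneous, multiplicatively convex, analytic map of
the open positive cone of ℝⁿ is type K order-preserving iff `G(f)` has an arc from each
vertex to itself. -/
theorem typeK_iff_loops
    {n : ℕ} (f : (Fin n → ℝ) → (Fin n → ℝ))
    (hf_maps : ∀ x : Fin n → ℝ, (∀ i, 0 < x i) → ∀ i, 0 < f x i)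
    (hf_mono : ∀ x y : Fin n → ℝ, (∀ i, 0 < x i) → (∀ i, 0 < y i) → x ≤ y → f x ≤ f y)
    (hf_hom : ∀ x : Fin n → ℝ, (∀ i, 0 < x i) → ∀ t : ℝ, 0 < t → f (t • x) = t • f x)
    (hf_mconv : ∀ i, ConvexOn ℝ Set.univ
      (fun v : Fin n → ℝ => Real.log (f (fun j => Real.exp (v j)) i)))
    (hf_anal : AnalyticOn ℝ f {x : Fin n → ℝ | ∀ i, 0 < x i}) :
    (∀ x y : Fin n → ℝ, (∀ i, 0 < x i) → (∀ i, 0 < y i) → x ≤ y →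
        ∃ ε > (0:ℝ), ∀ i, ε * (y i - x i) ≤ f y i - f x i) ↔
      (∀ i, GraphArc f i i) := by
  have typeK_iff_strict : ∀ x y : Fin n → ℝ, (∀ i, 0 < x i) → (∀ i, 0 < y i) → x ≤ y →
      ((∃ ε > (0:ℝ), ∀ i, ε * (y i - x i) ≤ f y i - f x i) ↔ ∀ i, x i < y i → f x i < f y i) :=
    fun x y hx hy hxy => by
      simpa only [sub_pos] using exists_pos_mul_le_iff (a := fun i => y i - x i)
        (b := fun i => f y i - f x i) fun i => sub_nonneg.2 (hf_mono x y hx hy hxy i)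
  constructor
  · intro hK i
    have hpos : ∀ j, 0 < exp ((Pi.single i 1 : Fin n → ℝ) j) := fun _ => exp_pos _
    have hle : (1 : Fin n → ℝ) ≤ fun j => exp ((Pi.single i 1 : Fin n → ℝ) j) :=
      fun j => one_le_exp (Pi.single_nonneg.2 zero_le_one j : (0 : Fin n → ℝ) j ≤ _)
    refine graphArc_self_of_apply_lt hf_maps (hf_mconv i)
      ((typeK_iff_strict _ _ (fun _ => one_pos) hpos hle).1 (hK _ _ (fun _ => one_pos) hpos hle)
        i ?_)
    simp
  · intro hloop x y hx hy hxy
    exact (typeK_iff_strict x y hx hy hxy).2 fun i =>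
      apply_lt_apply_of_graphArc_self hf_mono hf_hom hf_anal (hloop i) hx hy hxy
end

section
/- Let (M, d) be a metric space and F : M → M nonexpansive with respect to d. Let u ∈ M be a fixed point of F and let (x^m)_{m∈ℕ} be a sequence in M converging to u. Suppose there are constants η, θ ∈ (0,1) and c > 0 and R > 0 such that d(F^k(x), u) ≤ c·η^k for all x with d(x, u) ≤ R and all k ∈ ℕ, and d(F(x^m), x^{m+1}) ≤ c·θ^m for all m ∈ ℕ. Then limsup_{k→∞} d(x^k, u)^{1/k} ≤ η^λ = θ^{1−λ} < 1, where λ = log θ / (log η + log θ). -/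
/-!
Split `k = m + j` with `m ≈ (1 - λ) k`. Nonexpansiveness lets the true orbit `F^j (x^m)` shadow
the approximate orbit `x^{m+j}` up to the accumulated errors `∑_{i ≥ m} c θ^i ≤ c θ^m / (1 - θ)`,
while, once `x^m` lies within `R` of `u`, the true orbit is within `c η^j` of `u`. The choice of
`λ` balances the two terms: `θ^m` and `η^j` are both `O(ρ^k)` with `ρ = η^λ = θ^{1-λ}`.
-/

open Filter Topology

section Shadowing

variable {α : Type*} [PseudoMetricSpace α] {F : α → α} {x : ℕ → α}

theorem dist_iterate_le_sum_Ico (hF : ∀ y z, dist (F y) (F z) ≤ dist y z) {e : ℕ → ℝ}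
    (he : ∀ m, dist (F (x m)) (x (m + 1)) ≤ e m) (m j : ℕ) :
    dist (x (m + j)) (F^[j] (x m)) ≤ ∑ i ∈ Finset.Ico m (m + j), e i := by
  induction j with
  | zero => simp
  | succ j ih =>
    rw [Function.iterate_succ_apply', ← add_assoc, Finset.sum_Ico_succ_top (by omega)]
    calc dist (x (m + j + 1)) (F (F^[j] (x m)))
        ≤ dist (x (m + j + 1)) (F (x (m + j))) + dist (F (x (m + j))) (F (F^[j] (x m))) :=
          dist_triangle _ _ _
      _ ≤ ∑ i ∈ Finset.Ico m (m + j), e i + e (m + j) := by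
          rw [dist_comm]
          linarith [he (m + j), (hF (x (m + j)) (F^[j] (x m))).trans ih]

theorem dist_iterate_le_geometric (hF : ∀ y z, dist (F y) (F z) ≤ dist y z) {c θ : ℝ}
    (hc : 0 ≤ c) (hθ0 : 0 ≤ θ) (hθ1 : θ < 1)
    (he : ∀ m, dist (F (x m)) (x (m + 1)) ≤ c * θ ^ m) (m j : ℕ) :
    dist (x (m + j)) (F^[j] (x m)) ≤ c * θ ^ m / (1 - θ) := by
  calc dist (x (m + j)) (F^[j] (x m)) ≤ ∑ i ∈ Finset.Ico m (m + j), c * θ ^ i :=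
        dist_iterate_le_sum_Ico hF he m j
    _ = c * ∑ i ∈ Finset.Ico m (m + j), θ ^ i := (Finset.mul_sum ..).symm
    _ ≤ c * (θ ^ m / (1 - θ)) := by gcongr; exact geom_sum_Ico_le_of_lt_one hθ0 hθ1
    _ = c * θ ^ m / (1 - θ) := (mul_div_assoc ..).symm

end Shadowing

theorem eventually_exists_split {lam : ℝ} (h0 : 0 ≤ lam) (h1 : lam < 1) (N : ℕ) :
    ∀ᶠ k : ℕ in atTop, ∃ m j : ℕ, m + j = k ∧ N ≤ m ∧
      (1 - lam) * k ≤ m ∧ lam * k ≤ j + 1 := by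
  have hlarge : ∀ᶠ k : ℕ in atTop, (N : ℝ) ≤ (1 - lam) * k :=
    (tendsto_natCast_atTop_atTop.const_mul_atTop (sub_pos.2 h1)).eventually_ge_atTop _
  filter_upwards [hlarge] with k hk
  have hmk : ⌈(1 - lam) * k⌉₊ ≤ k :=
    Nat.ceil_le.2 (mul_le_of_le_one_left k.cast_nonneg (by linarith))
  refine ⟨⌈(1 - lam) * k⌉₊, k - ⌈(1 - lam) * k⌉₊, by omega,
    by exact_mod_cast hk.trans (Nat.le_ceil _), Nat.le_ceil _, ?_⟩
  have := Nat.ceil_lt_add_one (mul_nonneg (sub_nonneg.2 h1.le) k.cast_nonneg)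
  push_cast [hmk]
  linarith

theorem pow_le_rpow_pow {a s : ℝ} (ha0 : 0 < a) (ha1 : a ≤ 1) {m k : ℕ} (h : s * k ≤ m) :
    a ^ m ≤ (a ^ s) ^ k := by
  rw [← Real.rpow_natCast, ← Real.rpow_natCast, ← Real.rpow_mul ha0.le]
  exact Real.rpow_le_rpow_of_exponent_ge ha0 ha1 h

theorem limsup_rpow_inv_le_of_eventually_le {a : ℕ → ℝ} (ha : ∀ k, 0 ≤ a k) {C ρ : ℝ}
    (hC : 0 < C) (hρ : 0 ≤ ρ) (h : ∀ᶠ k in atTop, a k ≤ C * ρ ^ k) :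
    limsup (fun k => a k ^ ((k : ℝ)⁻¹)) atTop ≤ ρ := by
  have hroot : Tendsto (fun k : ℕ => C ^ ((k : ℝ)⁻¹) * ρ) atTop (𝓝 ρ) := by
    have : Tendsto (fun k : ℕ => C ^ ((k : ℝ)⁻¹)) atTop (𝓝 1) := by
      simpa [Function.comp_def] using ((Real.continuousAt_const_rpow hC.ne').tendsto.comp
        (tendsto_inv_atTop_zero.comp tendsto_natCast_atTop_atTop))
    simpa using this.mul_const ρ
  have hle : ∀ᶠ k in atTop, a k ^ ((k : ℝ)⁻¹) ≤ C ^ ((k : ℝ)⁻¹) * ρ := by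
    filter_upwards [h, eventually_ne_atTop 0] with k hk hk0
    calc a k ^ ((k : ℝ)⁻¹) ≤ (C * ρ ^ k) ^ ((k : ℝ)⁻¹) :=
          Real.rpow_le_rpow (ha k) hk (by positivity)
      _ = C ^ ((k : ℝ)⁻¹) * ρ := by
          rw [Real.mul_rpow hC.le (by positivity), Real.pow_rpow_inv_natCast hρ hk0]
  calc limsup (fun k => a k ^ ((k : ℝ)⁻¹)) atTop
        ≤ limsup (fun k : ℕ => C ^ ((k : ℝ)⁻¹) * ρ) atTop :=
        limsup_le_limsup hle (isBoundedUnder_of_eventually_ge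
          (Eventually.of_forall fun k => Real.rpow_nonneg (ha k) _)).isCoboundedUnder_le
          hroot.isBoundedUnder_le
    _ = ρ := hroot.limsup_eq

theorem rpow_log_div_eq {η θ : ℝ} (hη : 0 < η) (hθ : 0 < θ)
    (hL : Real.log η + Real.log θ ≠ 0) :
    η ^ (Real.log θ / (Real.log η + Real.log θ)) =
      θ ^ (1 - Real.log θ / (Real.log η + Real.log θ)) := by
  rw [Real.rpow_def_of_pos hη, Real.rpow_def_of_pos hθ]
  congr 1
  field_simp
  ring

theorem eventually_dist_le_of_approx_orbit {M : Type*} [PseudoMetricSpace M] {F : M → M}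
    (hF : ∀ y z, dist (F y) (F z) ≤ dist y z) {u : M} {x : ℕ → M}
    (hx : Tendsto x atTop (𝓝 u)) {η θ c R lam : ℝ} (hη0 : 0 < η) (hη1 : η ≤ 1) (hθ0 : 0 < θ)
    (hθ1 : θ < 1) (hc : 0 ≤ c) (hR : 0 < R) (hlam0 : 0 ≤ lam) (hlam1 : lam < 1)
    (h1 : ∀ y : M, dist y u ≤ R → ∀ k : ℕ, dist (F^[k] y) u ≤ c * η ^ k)
    (h2 : ∀ m : ℕ, dist (F (x m)) (x (m + 1)) ≤ c * θ ^ m) :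
    ∀ᶠ k in atTop,
      dist (x k) u ≤ c * η⁻¹ * (η ^ lam) ^ k + c / (1 - θ) * (θ ^ (1 - lam)) ^ k := by
  obtain ⟨N, hN⟩ := eventually_atTop.1 (hx (Metric.closedBall_mem_nhds u hR))
  filter_upwards [eventually_exists_split hlam0 hlam1 N]
  rintro _ ⟨m, j, rfl, hNm, hm, hj⟩
  have hηj : η ^ j ≤ η⁻¹ * (η ^ lam) ^ (m + j) := by
    rw [le_inv_mul_iff₀ hη0, ← pow_succ']
    exact pow_le_rpow_pow hη0 hη1 (by exact_mod_cast hj)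
  calc dist (x (m + j)) u ≤ dist (x (m + j)) (F^[j] (x m)) + dist (F^[j] (x m)) u :=
        dist_triangle _ _ _
    _ ≤ c * θ ^ m / (1 - θ) + c * η ^ j :=
        add_le_add (dist_iterate_le_geometric hF hc hθ0.le hθ1 h2 m j) (h1 _ (hN m hNm) j)
    _ ≤ c / (1 - θ) * (θ ^ (1 - lam)) ^ (m + j) + c * (η⁻¹ * (η ^ lam) ^ (m + j)) := by
        rw [mul_div_right_comm]
        gcongr
        exact pow_le_rpow_pow hθ0 hθ1.le hm
    _ = c * η⁻¹ * (η ^ lam) ^ (m + j) + c / (1 - θ) * (θ ^ (1 - lam)) ^ (m + j) := by ring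

theorem approximate_orbit_linear_rate_general
    {M : Type*} [MetricSpace M] (F : M → M)
    (hF_nonexp : ∀ x y : M, dist (F x) (F y) ≤ dist x y)
    (u : M)
    (x : ℕ → M) (hx : Tendsto x atTop (𝓝 u))
    (η θ c R : ℝ) (hη0 : 0 < η) (hη1 : η < 1) (hθ0 : 0 < θ) (hθ1 : θ < 1)
    (hc : 0 < c) (hR : 0 < R)
    (h1 : ∀ y : M, dist y u ≤ R → ∀ k : ℕ, dist (F^[k] y) u ≤ c * η ^ k)
    (h2 : ∀ m : ℕ, dist (F (x m)) (x (m + 1)) ≤ c * θ ^ m) :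
    limsup (fun k => dist (x k) u ^ ((k : ℝ)⁻¹)) atTop ≤
        η ^ (Real.log θ / (Real.log η + Real.log θ)) ∧
      η ^ (Real.log θ / (Real.log η + Real.log θ)) =
        θ ^ (1 - Real.log θ / (Real.log η + Real.log θ)) ∧
      η ^ (Real.log θ / (Real.log η + Real.log θ)) < 1 := by
  have hlogη := Real.log_neg hη0 hη1
  have hlogθ := Real.log_neg hθ0 hθ1
  have hL : Real.log η + Real.log θ < 0 := add_neg hlogη hlogθ
  set lam := Real.log θ / (Real.log η + Real.log θ)
  have hlam0 : 0 < lam := div_pos_of_neg_of_neg hlogθ hL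
  have hlam1 : lam < 1 := (div_lt_one_of_neg hL).2 (by linarith)
  have heq : η ^ lam = θ ^ (1 - lam) := rpow_log_div_eq hη0 hθ0 hL.ne
  refine ⟨?_, heq, Real.rpow_lt_one hη0.le hη1 hlam0⟩
  refine limsup_rpow_inv_le_of_eventually_le (C := c * η⁻¹ + c / (1 - θ))
    (fun k => dist_nonneg) (add_pos (by positivity) (div_pos hc (sub_pos.2 hθ1))) (by positivity) ?_
  filter_upwards [eventually_dist_le_of_approx_orbit hF_nonexp hx hη0 hη1.le hθ0 hθ1 hc.le hR
    hlam0.le hlam1 h1 h2] with k hk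
  rw [← heq] at hk
  exact hk.trans_eq (by ring)

/-- a quantitative interleaving lemma for nonexpansive maps: if iterates of `F`
contract to the fixed point `u` at rate `η` near `u`, and the sequence `x^m → u` is an
approximate orbit with errors `c θ^m`, then `x^k → u` R-linearly with rate
`η^λ = θ^{1-λ} < 1`, where `λ = log θ / (log η + log θ)`. -/
theorem approximate_orbit_linear_rate
    {M : Type*} [MetricSpace M] (F : M → M)
    (hF_nonexp : ∀ x y : M, dist (F x) (F y) ≤ dist x y)
    (u : M) (hu : F u = u)
    (x : ℕ → M) (hx : Tendsto x atTop (𝓝 u))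
    (η θ c R : ℝ) (hη0 : 0 < η) (hη1 : η < 1) (hθ0 : 0 < θ) (hθ1 : θ < 1)
    (hc : 0 < c) (hR : 0 < R)
    (h1 : ∀ y : M, dist y u ≤ R → ∀ k : ℕ, dist (F^[k] y) u ≤ c * η ^ k)
    (h2 : ∀ m : ℕ, dist (F (x m)) (x (m + 1)) ≤ c * θ ^ m) :
    limsup (fun k => dist (x k) u ^ ((k : ℝ)⁻¹)) atTop ≤
        η ^ (Real.log θ / (Real.log η + Real.log θ)) ∧
      η ^ (Real.log θ / (Real.log η + Real.log θ)) =
        θ ^ (1 - Real.log θ / (Real.log η + Real.log θ)) ∧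
      η ^ (Real.log θ / (Real.log η + Real.log θ)) < 1 :=
  approximate_orbit_linear_rate_general F hF_nonexp u x hx η θ c R hη0 hη1 hθ0 hθ1 hc hR h1 h2
end
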